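/- arXiv:1406.5361 — 7 statements merged into one kernel-verified Lean document; each statement's English description precedes it below -/
import Mathlib

section
/- Let k be a field of characteristic zero, let S = k[X_0, …, X_r] (r ≥ 1) be the graded polynomial ring, and let d ≥ 1 be an integer. Suppose ψ : S_d → S_d is a k-linear endomorphism of the space of degree-d forms such that ψ(ℓ·S_{d-1}) ⊆ ℓ·S_{d-1} for every linear form ℓ ∈ S_1. Then there is a single scalar α ∈ k such that ψ(f) = α·f for all f ∈ S_d (and ψ is the zero map if and only if α = 0). -/
/-!
If `ℓ ≠ 0` is a linear form, `ψ` maps `ℓ·S_{d-1} ≅ S_{d-1}` to itself, and the induced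
endomorphism of `S_{d-1}` still preserves divisibility by every linear form `m` not proportional
to `ℓ`, since `m` is prime. So we induct on the degree, for maps that preserve divisibility by
all linear forms off finitely many lines; the field being infinite, such forms still exist and
span `S_1`. By induction `ψ` acts by a scalar `α_ℓ` on each `ℓ·S_{d-1}`. Applying `ψ` to
`X_i^{d-1}·ℓ`, `X_i^{d-1}·ℓ'` and `X_i^{d-1}·(ℓ + tℓ')` for independent `ℓ, ℓ'` shows that
all `α_ℓ` agree, and the subspaces `ℓ·S_{d-1}` span `S_d`.
-/

open MvPolynomial Submodule
open scoped Pointwise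

section LinearAlgebra

variable (k : Type*) {V : Type*} [Field k] [AddCommGroup V] [Module k V]

def AvoidsLines (B : Set V) (x : V) : Prop :=
  x ≠ 0 ∧ ∀ b ∈ B, x ∉ k ∙ b

variable {k}

lemma avoidsLines_insert {B : Set V} {x y : V} :
    AvoidsLines k (insert y B) x ↔ AvoidsLines k B x ∧ x ∉ k ∙ y := by
  simp only [AvoidsLines, Set.forall_mem_insert]
  tauto

lemma subsingleton_setOf_add_smul_mem_span_singleton {v w : V}
    (h : LinearIndependent k ![v, w]) (b : V) :
    {t : k | v + t • w ∈ k ∙ b}.Subsingleton := by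
  intro t₁ ht₁ t₂ ht₂
  obtain ⟨e₁, he₁⟩ := mem_span_singleton.1 ht₁
  obtain ⟨e₂, he₂⟩ := mem_span_singleton.1 ht₂
  obtain ⟨he, het⟩ := LinearIndependent.pair_iff.1 h (e₂ - e₁) (e₂ * t₁ - e₁ * t₂) <| by
    calc (e₂ - e₁) • v + (e₂ * t₁ - e₁ * t₂) • w = e₂ • (v + t₁ • w) - e₁ • (v + t₂ • w) := by
          module
      _ = 0 := by rw [← he₁, ← he₂, smul_smul, smul_smul, mul_comm, sub_self]
  rw [sub_eq_zero] at he het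
  rcases eq_or_ne e₁ 0 with he₁0 | he₁0
  · rw [he₁0, zero_smul] at he₁
    exact absurd (LinearIndependent.pair_iff.1 h 1 t₁ (by rw [one_smul, he₁])).1 one_ne_zero
  · rw [he] at het
    exact mul_left_cancel₀ he₁0 het

lemma exists_avoidsLines_add_smul [Infinite k] {B : Set V} (hB : B.Finite) (A : Finset k)
    {v w : V} (h : LinearIndependent k ![v, w]) : ∃ t ∉ A, AvoidsLines k B (v + t • w) := by
  have hfin : ((A : Set k) ∪ ⋃ b ∈ B, {t : k | v + t • w ∈ k ∙ b}).Finite :=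
    A.finite_toSet.union <| hB.biUnion fun b _ =>
      (subsingleton_setOf_add_smul_mem_span_singleton h b).finite
  obtain ⟨t, ht⟩ := hfin.exists_notMem
  simp only [Set.mem_union, Finset.mem_coe, Set.mem_iUnion, Set.mem_ofPred_eq, not_or,
    not_exists] at ht
  refine ⟨t, ht.1, fun h0 => ?_, fun b hb => ht.2 b hb⟩
  exact one_ne_zero (LinearIndependent.pair_iff.1 h 1 t (by rwa [one_smul])).1

lemma mem_span_avoidsLines [Infinite k] (P : Submodule k V) {B : Set V} (hB : B.Finite) {v w : V}
    (hv : v ∈ P) (hw : w ∈ P) (h : LinearIndependent k ![v, w]) :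
    v ∈ span k {x | x ∈ P ∧ AvoidsLines k B x} := by
  obtain ⟨t₁, -, ht₁⟩ := exists_avoidsLines_add_smul hB ∅ h
  obtain ⟨t₂, ht₂, ht₂'⟩ := exists_avoidsLines_add_smul hB {t₁} h
  have hne : t₂ - t₁ ≠ 0 := sub_ne_zero.2 (by simpa using ht₂)
  have hmem : ∀ t, AvoidsLines k B (v + t • w) →
      v + t • w ∈ span k {x | x ∈ P ∧ AvoidsLines k B x} := fun t ht =>
    subset_span ⟨P.add_mem hv (P.smul_mem t hw), ht⟩
  have hv' : v = (t₂ - t₁)⁻¹ • (t₂ • (v + t₁ • w) - t₁ • (v + t₂ • w)) := by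
    rw [show t₂ • (v + t₁ • w) - t₁ • (v + t₂ • w) = (t₂ - t₁) • v by module, smul_smul,
      inv_mul_cancel₀ hne, one_smul]
  rw [hv']
  exact smul_mem _ _ (sub_mem (smul_mem _ _ (hmem _ ht₁)) (smul_mem _ _ (hmem _ ht₂')))

lemma LinearMap.eq_of_apply_add_smul_eq_smul {φ : V →ₗ[k] V} {x y : V} {a b c t : k}
    (h : LinearIndependent k ![x, y]) (ht : t ≠ 0) (hx : φ x = a • x) (hy : φ y = b • y)
    (hxy : φ (x + t • y) = c • (x + t • y)) : a = b := by
  rw [map_add, map_smul, hx, hy] at hxy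
  obtain ⟨hca, hcb⟩ := LinearIndependent.pair_iff.1 h (c - a) (t * (c - b)) <| by
    linear_combination (norm := module) -hxy
  rw [mul_eq_zero, or_iff_right ht, sub_eq_zero] at hcb
  rw [← sub_eq_zero.1 hca, hcb]

lemma LinearMap.exists_comp_eq_comp_of_injective {R M N : Type*} [Semiring R] [AddCommMonoid M]
    [AddCommMonoid N] [Module R M] [Module R N] {μ : M →ₗ[R] N} (hμ : Function.Injective μ)
    {φ : N →ₗ[R] N} (h : ∀ x, φ (μ x) ∈ LinearMap.range μ) :
    ∃ Φ : M →ₗ[R] M, ∀ x, μ (Φ x) = φ (μ x) :=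
  ⟨(LinearEquiv.ofInjective μ hμ).symm.toLinearMap ∘ₗ (φ ∘ₗ μ).codRestrict _ h, fun x =>
    congrArg Subtype.val ((LinearEquiv.ofInjective μ hμ).apply_symm_apply ⟨_, h x⟩)⟩

end LinearAlgebra

namespace MvPolynomial

section CommSemiring

variable {σ R : Type*} [CommSemiring R]

attribute [local instance] gradedAlgebra in
lemma IsHomogeneous.exists_eq_mul_of_dvd {g p : MvPolynomial σ R} {m n : ℕ}
    (hg : g.IsHomogeneous m) (hp : p.IsHomogeneous n) (h : g ∣ p) :
    ∃ q, q.IsHomogeneous (n - m) ∧ p = g * q := by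
  obtain ⟨q, rfl⟩ := h
  rw [← DirectSum.decompose_of_mem_same (homogeneousSubmodule σ R) (x := g * q) hp]
  by_cases hmn : m ≤ n
  · exact ⟨_, (DirectSum.decompose (homogeneousSubmodule σ R) q (n - m)).2,
      DirectSum.coe_decompose_mul_of_left_mem_of_le _ hg hmn⟩
  · exact ⟨0, isHomogeneous_zero _ _ _, by
      rw [DirectSum.coe_decompose_mul_of_left_mem_of_not_le _ hg hmn, mul_zero]⟩

lemma mem_map_mulLeft_homogeneousSubmodule_iff {ℓ f : MvPolynomial σ R} {m n : ℕ}
    (hℓ : ℓ.IsHomogeneous m) (hf : f.IsHomogeneous n) :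
    f ∈ (homogeneousSubmodule σ R (n - m)).map (LinearMap.mulLeft R ℓ) ↔ ℓ ∣ f := by
  refine ⟨fun ⟨q, _, hq⟩ => ⟨q, hq.symm⟩, fun h => ?_⟩
  obtain ⟨q, hq, rfl⟩ := hℓ.exists_eq_mul_of_dvd hf h
  exact ⟨q, hq, rfl⟩

lemma IsHomogeneous.exists_eq_smul_of_dvd {g p : MvPolynomial σ R} {n : ℕ}
    (hg : g.IsHomogeneous n) (hp : p.IsHomogeneous n) (h : g ∣ p) : ∃ c : R, p = c • g := by
  obtain ⟨q, hq, rfl⟩ := hg.exists_eq_mul_of_dvd hp h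
  rw [Nat.sub_self, ← totalDegree_zero_iff_isHomogeneous, totalDegree_eq_zero_iff_eq_C] at hq
  exact ⟨coeff 0 q, by rw [smul_eq_C_mul, ← hq, mul_comm]⟩

lemma homogeneousSubmodule_succ_le {G : Set (MvPolynomial σ R)}
    (hG : homogeneousSubmodule σ R 1 ≤ span R G) (n : ℕ) {Z : Submodule R (MvPolynomial σ R)}
    (hZ : ∀ q ∈ homogeneousSubmodule σ R n, ∀ ℓ ∈ G, q * ℓ ∈ Z) :
    homogeneousSubmodule σ R (n + 1) ≤ Z := by
  rw [← homogeneousSubmodule_one_pow, pow_succ, homogeneousSubmodule_one_pow]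
  calc _ ≤ homogeneousSubmodule σ R n * span R G := mul_le_mul_right hG _
    _ = span R ((homogeneousSubmodule σ R n : Set (MvPolynomial σ R)) * G) := by
      rw [← span_mul_span, span_eq]
    _ ≤ Z := span_le.2 (Set.mul_subset_iff.2 hZ)

lemma linearIndependent_X_pair {i j : σ} (hij : i ≠ j) :
    LinearIndependent R ![(X i : MvPolynomial σ R), X j] := by
  convert (linearIndependent_X σ R).comp ![i, j] fun a b => by
    fin_cases a <;> fin_cases b <;> simp [hij, hij.symm]
  ext a
  fin_cases a <;> rfl

end CommSemiring

section Field

variable {σ k : Type*} [Field k]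

lemma prime_of_isHomogeneous_one {ℓ : MvPolynomial σ k} (hℓ : ℓ.IsHomogeneous 1) (h0 : ℓ ≠ 0) :
    Prime ℓ := by
  refine (irreducible_of_totalDegree_eq_one (hℓ.totalDegree h0) fun x hx => ?_).prime
  refine Ne.isUnit fun hx0 => h0 ?_
  ext m
  simpa [hx0] using hx m

lemma dvd_of_dvd_mul_right_of_notMem_span {m ℓ q : MvPolynomial σ k}
    (hm : m.IsHomogeneous 1) (hm0 : m ≠ 0) (hℓ : ℓ.IsHomogeneous 1) (hℓ0 : ℓ ≠ 0)
    (hmℓ : m ∉ k ∙ ℓ) (h : m ∣ q * ℓ) : m ∣ q := by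
  refine ((prime_of_isHomogeneous_one hm hm0).dvd_or_dvd h).resolve_right fun hdvd => hmℓ ?_
  obtain ⟨c, rfl⟩ := hm.exists_eq_smul_of_dvd hℓ hdvd
  have hc : c ≠ 0 := by rintro rfl; exact hℓ0 (zero_smul k m)
  exact mem_span_singleton.2 ⟨c⁻¹, by rw [smul_smul, inv_mul_cancel₀ hc, one_smul]⟩

lemma exists_eq_smul_of_homogeneousSubmodule_zero
    (φ : Module.End k (homogeneousSubmodule σ k 0)) : ∃ α : k, ∀ f, φ f = α • f := by
  set one : homogeneousSubmodule σ k 0 := ⟨1, isHomogeneous_one σ k⟩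
  have hone : ∀ f : homogeneousSubmodule σ k 0, f = coeff 0 (f : MvPolynomial σ k) • one := by
    intro f
    have hf := (totalDegree_zero_iff_isHomogeneous σ).2 f.2
    rw [totalDegree_eq_zero_iff_eq_C] at hf
    exact Subtype.ext (by rw [SetLike.val_smul, smul_eq_C_mul, mul_one, ← hf])
  obtain ⟨a, ha⟩ : ∃ a : k, φ one = a • one := ⟨_, hone (φ one)⟩
  refine ⟨a, fun f => ?_⟩
  rw [hone f, map_smul, ha, smul_comm]

def PreservesLinearFactors (B : Set (MvPolynomial σ k)) {n : ℕ}
    (φ : Module.End k (homogeneousSubmodule σ k n)) : Prop :=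
  ∀ ℓ : MvPolynomial σ k, ℓ.IsHomogeneous 1 → AvoidsLines k B ℓ →
    ∀ f : homogeneousSubmodule σ k n, ℓ ∣ (f : MvPolynomial σ k) → ℓ ∣ (φ f : MvPolynomial σ k)

lemma PreservesLinearFactors.exists_eq_smul_of_dvd {B : Set (MvPolynomial σ k)} {n : ℕ}
    {φ : Module.End k (homogeneousSubmodule σ k (n + 1))} (hφ : PreservesLinearFactors B φ)
    {ℓ : MvPolynomial σ k} (hℓ : ℓ.IsHomogeneous 1) (hℓB : AvoidsLines k B ℓ)
    (ih : ∀ Φ : Module.End k (homogeneousSubmodule σ k n),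
      PreservesLinearFactors (insert ℓ B) Φ → ∃ α : k, ∀ q, Φ q = α • q) :
    ∃ α : k, ∀ f : homogeneousSubmodule σ k (n + 1), ℓ ∣ (f : MvPolynomial σ k) → φ f = α • f := by
  let μ : homogeneousSubmodule σ k n →ₗ[k] homogeneousSubmodule σ k (n + 1) :=
    (LinearMap.mulRight k ℓ).restrict fun _ hq => hq.mul hℓ
  have hμ : Function.Injective μ := fun q q' h =>
    Subtype.ext (mul_right_cancel₀ hℓB.1 (congrArg Subtype.val h))
  have hrange : ∀ f : homogeneousSubmodule σ k (n + 1), ℓ ∣ (f : MvPolynomial σ k) →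
      f ∈ LinearMap.range μ := by
    intro f hf
    obtain ⟨q, hq, hfq⟩ := hℓ.exists_eq_mul_of_dvd f.2 hf
    exact ⟨⟨q, hq⟩, Subtype.ext (by rw [hfq, mul_comm]; rfl)⟩
  obtain ⟨Φ, hΦ⟩ := LinearMap.exists_comp_eq_comp_of_injective hμ fun q =>
    hrange _ (hφ ℓ hℓ hℓB _ (dvd_mul_left ℓ q))
  obtain ⟨α, hα⟩ := ih Φ fun m hm hmB q hmq => by
    rw [avoidsLines_insert] at hmB
    refine dvd_of_dvd_mul_right_of_notMem_span hm hmB.1.1 hℓ hℓB.1 hmB.2 ?_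
    have := hφ m hm hmB.1 (μ q) (hmq.mul_right ℓ)
    rwa [← hΦ] at this
  refine ⟨α, fun f hf => ?_⟩
  obtain ⟨q, rfl⟩ := hrange f hf
  rw [← hΦ, hα, map_smul]

variable [Infinite k]

lemma homogeneousSubmodule_one_le_span_avoidsLines [Nontrivial σ] {B : Set (MvPolynomial σ k)}
    (hB : B.Finite) :
    homogeneousSubmodule σ k 1 ≤
      span k {ℓ | ℓ ∈ homogeneousSubmodule σ k 1 ∧ AvoidsLines k B ℓ} := by
  conv_lhs => rw [homogeneousSubmodule_one_eq_span_X]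
  refine span_le.2 ?_
  rintro _ ⟨i, rfl⟩
  obtain ⟨j, hj⟩ := exists_ne i
  exact mem_span_avoidsLines _ hB (isHomogeneous_X k i) (isHomogeneous_X k j)
    (linearIndependent_X_pair hj.symm)

lemma exists_isHomogeneous_one_avoidsLines [Nontrivial σ] {B : Set (MvPolynomial σ k)}
    (hB : B.Finite) : ∃ ℓ, ℓ.IsHomogeneous 1 ∧ AvoidsLines k B ℓ := by
  obtain ⟨i, j, hij⟩ := exists_pair_ne σ
  obtain ⟨t, -, ht⟩ := exists_avoidsLines_add_smul hB ∅ (linearIndependent_X_pair (R := k) hij)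
  exact ⟨_, (isHomogeneous_X k i).add ((homogeneousSubmodule σ k 1).smul_mem t
    (isHomogeneous_X k j)), ht⟩

lemma eq_of_forall_dvd_apply_eq_smul [Nonempty σ] {B : Set (MvPolynomial σ k)} (hB : B.Finite)
    {n : ℕ} {φ : Module.End k (homogeneousSubmodule σ k (n + 1))} {α : MvPolynomial σ k → k}
    (hα : ∀ ℓ : MvPolynomial σ k, ℓ.IsHomogeneous 1 → AvoidsLines k B ℓ →
      ∀ f : homogeneousSubmodule σ k (n + 1), ℓ ∣ (f : MvPolynomial σ k) → φ f = α ℓ • f)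
    {ℓ₀ ℓ : MvPolynomial σ k} (hℓ₀ : ℓ₀.IsHomogeneous 1) (hℓ₀B : AvoidsLines k B ℓ₀)
    (hℓ : ℓ.IsHomogeneous 1) (hℓB : AvoidsLines k B ℓ) (h : LinearIndependent k ![ℓ₀, ℓ]) :
    α ℓ₀ = α ℓ := by
  obtain ⟨t, ht0, hgood⟩ := exists_avoidsLines_add_smul hB {0} h
  obtain ⟨i⟩ := ‹Nonempty σ›
  let mulXPow (g : MvPolynomial σ k) (hg : g.IsHomogeneous 1) : homogeneousSubmodule σ k (n + 1) :=
    ⟨X i ^ n * g, (isHomogeneous_X_pow i n).mul hg⟩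
  have hind : LinearIndependent k ![mulXPow ℓ₀ hℓ₀, mulXPow ℓ hℓ] := by
    rw [LinearIndependent.pair_iff] at h ⊢
    intro s u hsu
    refine h s u ((mul_eq_zero.1 ?_).resolve_left (pow_ne_zero n (X_ne_zero i)))
    rw [mul_add, mul_smul_comm, mul_smul_comm]
    exact congrArg Subtype.val hsu
  refine LinearMap.eq_of_apply_add_smul_eq_smul hind (by simpa using ht0)
    (hα ℓ₀ hℓ₀ hℓ₀B _ (dvd_mul_left _ _)) (hα ℓ hℓ hℓB _ (dvd_mul_left _ _))
    (hα _ ((homogeneousSubmodule σ k 1).add_mem hℓ₀ ((homogeneousSubmodule σ k 1).smul_mem t hℓ))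
      hgood _ ⟨X i ^ n, ?_⟩)
  show X i ^ n * ℓ₀ + t • (X i ^ n * ℓ) = (ℓ₀ + t • ℓ) * X i ^ n
  simp only [smul_eq_C_mul]
  ring

theorem PreservesLinearFactors.exists_eq_smul [Nontrivial σ] {n : ℕ} {B : Set (MvPolynomial σ k)}
    (hB : B.Finite) {φ : Module.End k (homogeneousSubmodule σ k n)}
    (hφ : PreservesLinearFactors B φ) : ∃ α : k, ∀ f, φ f = α • f := by
  induction n generalizing B with
  | zero => exact exists_eq_smul_of_homogeneousSubmodule_zero φ
  | succ n ih =>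
    choose! α hα using fun ℓ (hℓ : ℓ.IsHomogeneous 1) (hℓB : AvoidsLines k B ℓ) =>
      hφ.exists_eq_smul_of_dvd hℓ hℓB fun _ => ih (hB.insert ℓ)
    obtain ⟨ℓ₀, hℓ₀, hℓ₀B⟩ := exists_isHomogeneous_one_avoidsLines hB
    refine ⟨α ℓ₀, fun f => ?_⟩
    have hle := homogeneousSubmodule_succ_le
      (homogeneousSubmodule_one_le_span_avoidsLines (hB.insert ℓ₀)) n
      (Z := (φ.eigenspace (α ℓ₀)).map (homogeneousSubmodule σ k (n + 1)).subtype) ?_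
    · obtain ⟨g, hg, hgf⟩ := hle f.2
      rw [← Subtype.ext hgf]
      exact Module.End.mem_eigenspace_iff.1 hg
    · rintro q hq ℓ ⟨hℓ, hℓB⟩
      rw [avoidsLines_insert] at hℓB
      have hind : LinearIndependent k ![ℓ₀, ℓ] := (LinearIndependent.pair_iff' hℓ₀B.1).2
        fun a ha => hℓB.2 (mem_span_singleton.2 ⟨a, ha⟩)
      refine ⟨⟨q * ℓ, hq.mul hℓ⟩, Module.End.mem_eigenspace_iff.2 ?_, rfl⟩
      rw [eq_of_forall_dvd_apply_eq_smul hB hα hℓ₀ hℓ₀B hℓ hℓB.1 hind]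
      exact hα ℓ hℓ hℓB.1 _ (dvd_mul_left ℓ q)

end Field

end MvPolynomial

theorem stmt_0_general {k : Type*} [Field k] [CharZero k] (r : ℕ) (hr : 1 ≤ r) (d : ℕ)
    (ψ : homogeneousSubmodule (Fin (r + 1)) k d →ₗ[k] homogeneousSubmodule (Fin (r + 1)) k d)
    (hψ : ∀ ℓ ∈ homogeneousSubmodule (Fin (r + 1)) k 1,
      ∀ f : homogeneousSubmodule (Fin (r + 1)) k d,
        (f : MvPolynomial (Fin (r + 1)) k) ∈
            Submodule.map (LinearMap.mulLeft k ℓ)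
              (homogeneousSubmodule (Fin (r + 1)) k (d - 1)) →
          (ψ f : MvPolynomial (Fin (r + 1)) k) ∈
            Submodule.map (LinearMap.mulLeft k ℓ)
              (homogeneousSubmodule (Fin (r + 1)) k (d - 1))) :
    ∃ α : k, (∀ f, ψ f = α • f) ∧ (ψ = 0 ↔ α = 0) := by
  have : Nontrivial (Fin (r + 1)) := Fin.nontrivial_iff_two_le.2 (by omega)
  obtain ⟨α, hα⟩ := PreservesLinearFactors.exists_eq_smul (B := ∅) Set.finite_empty
    (φ := ψ) fun ℓ hℓ _ f hf => (mem_map_mulLeft_homogeneousSubmodule_iff hℓ (ψ f).2).1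
      (hψ ℓ hℓ f ((mem_map_mulLeft_homogeneousSubmodule_iff hℓ f.2).2 hf))
  refine ⟨α, hα, fun hψ0 => ?_, fun hα0 => LinearMap.ext fun f => by simp [hα, hα0]⟩
  let x : homogeneousSubmodule (Fin (r + 1)) k d := ⟨X 0 ^ d, isHomogeneous_X_pow 0 d⟩
  have hx : x ≠ 0 := fun h => pow_ne_zero d (X_ne_zero 0) (congrArg Subtype.val h)
  have hαx := hα x
  rw [hψ0, LinearMap.zero_apply, eq_comm, smul_eq_zero] at hαx
  exact hαx.resolve_right hx

/-- If `ψ` is a `k`-linear endomorphism of the space `S_d` of degree-`d`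
forms of `S = k[X_0, …, X_r]` (with `char k = 0`, `r ≥ 1`, `d ≥ 1`) mapping `ℓ·S_{d-1}`
into itself for every linear form `ℓ ∈ S_1`, then `ψ` is multiplication by a single scalar
`α ∈ k`, and `ψ = 0` iff `α = 0`. -/
theorem stmt_0 {k : Type*} [Field k] [CharZero k] (r : ℕ) (hr : 1 ≤ r) (d : ℕ) (hd : 1 ≤ d)
    (ψ : homogeneousSubmodule (Fin (r + 1)) k d →ₗ[k] homogeneousSubmodule (Fin (r + 1)) k d)
    (hψ : ∀ ℓ ∈ homogeneousSubmodule (Fin (r + 1)) k 1,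
      ∀ f : homogeneousSubmodule (Fin (r + 1)) k d,
        (f : MvPolynomial (Fin (r + 1)) k) ∈
            Submodule.map (LinearMap.mulLeft k ℓ)
              (homogeneousSubmodule (Fin (r + 1)) k (d - 1)) →
          (ψ f : MvPolynomial (Fin (r + 1)) k) ∈
            Submodule.map (LinearMap.mulLeft k ℓ)
              (homogeneousSubmodule (Fin (r + 1)) k (d - 1))) :
    ∃ α : k, (∀ f, ψ f = α • f) ∧ (ψ = 0 ↔ α = 0) :=
  stmt_0_general r hr d ψ hψ
end

section
/- Let k be a field of characteristic zero, P = k[x,y,z,t], and S = k[x,y,z] ⊆ P. Let I ⊆ P be a homogeneous ideal, let d ≥ 1, and let ℓ ∈ S_1 be a linear form in x, y, z only that is a nonzerodivisor on P/I. Assume that for every f in the degree-d component I_d one has ℓ·(∂f/∂t) ∈ I_d. Then I_d is spanned as a k-vector space by its elements of the form t^{d-i}·h with h ∈ S_i (0 ≤ i ≤ d), i.e., by those of its elements that are a power of t times a form in x, y, z. -/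
/-!
Let `E = t ∂/∂t` be the Euler operator in `t`; it multiplies the part of `t`-degree `j` of
a polynomial by `j`. For `f ∈ I_d` we have `ℓ · E f = t · ℓ ∂f/∂t ∈ I`, so `E f ∈ I_d`
because `ℓ` is a nonzerodivisor: `I_d` is `E`-stable. On forms of degree `d` the eigenvalues
`0, …, d` of `E` are distinct in characteristic zero, so the projection onto each `t`-degree
part is a polynomial in `E` (a Lagrange basis polynomial) and therefore preserves `I_d`.
Finally a form of degree `d` that is homogeneous of degree `j` in `t` is `t ^ j` times a form
of degree `d - j` in `x, y, z`.
-/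

namespace MvPolynomial

variable {σ R : Type*} [CommSemiring R]

theorem IsWeightedHomogeneous.divMonomial {p : MvPolynomial σ R} {w : σ → ℕ} {n : ℕ}
    (hp : IsWeightedHomogeneous w p n) (s : σ →₀ ℕ) :
    IsWeightedHomogeneous w (p.divMonomial s) (n - Finsupp.weight w s) := by
  intro m hm
  have := hp hm
  rw [map_add] at this
  omega

theorem monomial_one_mul_divMonomial {p : MvPolynomial σ R} {s : σ →₀ ℕ}
    (hp : ∀ m ∈ p.support, s ≤ m) :
    monomial s 1 * (p.divMonomial s) = p := by
  have hmod : p.modMonomial s = 0 := by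
    ext m
    by_cases hsm : s ≤ m
    · exact coeff_modMonomial_of_le p hsm
    · rw [coeff_modMonomial_of_not_le p hsm, coeff_zero]
      exact notMem_support_iff.1 (mt (hp m) hsm)
  simpa [hmod] using modMonomial_add_divMonomial p s

noncomputable def eulerDeriv (i : σ) : Module.End R (MvPolynomial σ R) :=
  LinearMap.mulLeft R (X i) ∘ₗ (pderiv i).toLinearMap

theorem eulerDeriv_apply (i : σ) (f : MvPolynomial σ R) :
    eulerDeriv i f = X i * pderiv i f := rfl

theorem coeff_eulerDeriv (i : σ) (f : MvPolynomial σ R) (m : σ →₀ ℕ) :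
    coeff m (eulerDeriv i f) = m i * coeff m f := by
  classical
  rw [eulerDeriv_apply, coeff_X_mul', coeff_pderiv]
  split_ifs with hi
  · have hle : 1 ≤ m i := Nat.one_le_iff_ne_zero.2 (Finsupp.mem_support_iff.1 hi)
    rw [tsub_add_cancel_of_le (Finsupp.single_le_iff.2 hle), Finsupp.tsub_apply,
      Finsupp.single_eq_same, ← Nat.cast_add_one, Nat.sub_add_cancel hle, mul_comm]
  · rw [Finsupp.notMem_support_iff.1 hi, Nat.cast_zero, zero_mul]

theorem coeff_aeval_eulerDeriv (i : σ) (q : Polynomial R) (f : MvPolynomial σ R)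
    (m : σ →₀ ℕ) :
    coeff m (Polynomial.aeval (eulerDeriv i) q f) = q.eval (m i : R) * coeff m f := by
  induction q using Polynomial.induction_on with
  | C a => simp
  | add q r hq hr => simp [hq, hr, add_mul]
  | monomial n a ih =>
    rw [pow_succ', mul_left_comm, map_mul, Module.End.mul_apply, Polynomial.aeval_X,
      coeff_eulerDeriv, ih]
    simp only [Polynomial.eval_mul, Polynomial.eval_X]
    ring

theorem IsWeightedHomogeneous.eulerDeriv {w : σ → ℕ} {n : ℕ} {f : MvPolynomial σ R}
    (hf : IsWeightedHomogeneous w f n) (i : σ) :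
    IsWeightedHomogeneous w (eulerDeriv i f) n := fun m hm =>
  hf (right_ne_zero_of_mul (coeff_eulerDeriv i f m ▸ hm))

theorem IsHomogeneous.apply_le_of_mem_support {f : MvPolynomial σ R} {d : ℕ}
    (hf : f.IsHomogeneous d) {m : σ →₀ ℕ} (hm : m ∈ f.support) (i : σ) : m i ≤ d :=
  hf (mem_support_iff.1 hm) ▸ Finsupp.le_weight 1 one_ne_zero m

variable [DecidableEq σ] {i : σ}

theorem IsWeightedHomogeneous.notMem_vars_of_single_zero {p : MvPolynomial σ R}
    (hp : IsWeightedHomogeneous (Pi.single i 1) p 0) : i ∉ p.vars := by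
  rw [mem_vars_iff_mem_support]
  rintro ⟨m, hm, him⟩
  have := hp (mem_support_iff.1 hm)
  rw [Finsupp.weight_single_one_apply] at this
  exact Finsupp.mem_support_iff.1 him this

theorem IsWeightedHomogeneous.X_pow_mul_divMonomial {p : MvPolynomial σ R} {j : ℕ}
    (hp : IsWeightedHomogeneous (Pi.single i 1) p j) :
    X i ^ j * (p.divMonomial (Finsupp.single i j)) = p := by
  rw [X_pow_eq_monomial]
  refine monomial_one_mul_divMonomial fun m hm => ?_
  have := hp (mem_support_iff.1 hm)
  rw [Finsupp.weight_single_one_apply] at this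
  exact Finsupp.single_le_iff.2 this.ge

theorem sum_weightedHomogeneousComponent_single {f : MvPolynomial σ R} {s : Finset ℕ}
    (hf : ∀ m ∈ f.support, m i ∈ s) :
    ∑ j ∈ s, weightedHomogeneousComponent (Pi.single i 1) j f = f := by
  ext m
  simp only [coeff_sum, coeff_weightedHomogeneousComponent, Finsupp.weight_single_one_apply,
    Finset.sum_ite_eq]
  split_ifs with h
  · rfl
  · exact (notMem_support_iff.1 (mt (hf m) h)).symm

theorem weightedHomogeneousComponent_single_eq_aeval_eulerDeriv {K : Type*} [Field K]
    [CharZero K] {f : MvPolynomial σ K} {s : Finset ℕ} (hf : ∀ m ∈ f.support, m i ∈ s)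
    {j : ℕ} (hj : j ∈ s) :
    weightedHomogeneousComponent (Pi.single i 1) j f =
      Polynomial.aeval (eulerDeriv i) (Lagrange.basis s (Nat.cast : ℕ → K) j) f := by
  ext m
  rw [coeff_weightedHomogeneousComponent, Finsupp.weight_single_one_apply,
    coeff_aeval_eulerDeriv]
  by_cases hm : m ∈ f.support
  · split_ifs with hmj
    · rw [hmj, Lagrange.eval_basis_self Nat.cast_injective.injOn hj, one_mul]
    · rw [Lagrange.eval_basis_of_ne (Ne.symm hmj) (hf m hm), zero_mul]
  · simp [notMem_support_iff.1 hm]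

end MvPolynomial

open MvPolynomial

theorem stmt_2_general {k : Type*} [Field k] [CharZero k]
    (I : Ideal (MvPolynomial (Fin 4) k))
    (d : ℕ)
    (ℓ : MvPolynomial (Fin 4) k)
    (hreg : ∀ g : MvPolynomial (Fin 4) k, ℓ * g ∈ I → g ∈ I)
    (hder : ∀ f ∈ I, f ∈ homogeneousSubmodule (Fin 4) k d →
      ℓ * pderiv (3 : Fin 4) f ∈ I) :
    Submodule.span k {f : MvPolynomial (Fin 4) k |
        f ∈ I ∧ f ∈ homogeneousSubmodule (Fin 4) k d ∧
        ∃ i ≤ d, ∃ h : MvPolynomial (Fin 4) k,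
          h ∈ homogeneousSubmodule (Fin 4) k i ∧ (3 : Fin 4) ∉ h.vars ∧
          f = X 3 ^ (d - i) * h} =
      Submodule.restrictScalars k I ⊓ homogeneousSubmodule (Fin 4) k d := by
  set W := I.restrictScalars k ⊓ homogeneousSubmodule (Fin 4) k d
  have hW : W ≤ W.comap (eulerDeriv 3) := by
    rintro f ⟨hfI, hfd⟩
    refine ⟨hreg _ ?_, ((mem_homogeneousSubmodule _ _).1 hfd).eulerDeriv 3⟩
    simpa [eulerDeriv_apply, mul_left_comm] using I.mul_mem_left (X 3) (hder f hfI hfd)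
  refine le_antisymm (Submodule.span_le.2 fun f hf => ⟨hf.1, hf.2.1⟩) fun f hf => ?_
  have hsupp : ∀ m ∈ f.support, m 3 ∈ Finset.range (d + 1) := fun m hm =>
    Finset.mem_range_succ_iff.2 (hf.2.apply_le_of_mem_support hm 3)
  rw [← sum_weightedHomogeneousComponent_single hsupp]
  refine Submodule.sum_mem _ fun j hj => Submodule.subset_span ?_
  have hjd : j ≤ d := Finset.mem_range_succ_iff.1 hj
  have hpW : weightedHomogeneousComponent (Pi.single 3 1) j f ∈ W := by
    rw [weightedHomogeneousComponent_single_eq_aeval_eulerDeriv hsupp hj]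
    exact Polynomial.aeval_apply_smul_mem_of_le_comap hf _ _ hW
  set p := weightedHomogeneousComponent (Pi.single 3 1) j f
  have hpj : IsWeightedHomogeneous (Pi.single 3 1) p j :=
    weightedHomogeneousComponent_isWeightedHomogeneous j f
  refine ⟨hpW.1, hpW.2, d - j, Nat.sub_le d j, p.divMonomial (Finsupp.single 3 j), ?_, ?_, ?_⟩
  · simpa [IsHomogeneous, Finsupp.weight_single] using hpW.2.divMonomial (Finsupp.single 3 j)
  · refine IsWeightedHomogeneous.notMem_vars_of_single_zero ?_
    simpa [Finsupp.weight_single] using hpj.divMonomial (Finsupp.single 3 j)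
  · rw [Nat.sub_sub_self hjd, hpj.X_pow_mul_divMonomial]

/-- Let `P = k[x,y,z,t]` (char `k` = 0), `I ⊆ P` a homogeneous ideal,
`d ≥ 1`, and let `ℓ` be a linear form in `x, y, z` only (variables `0, 1, 2`) which is a
nonzerodivisor on `P/I`.  If `ℓ·(∂f/∂t) ∈ I_d` for every `f ∈ I_d`, then `I_d` is spanned
as a `k`-vector space by those of its elements that have the form `t^(d-i)·h` with
`h ∈ S_i = k[x,y,z]_i`.  Here the variable `t` is `X 3`. -/
theorem stmt_2 {k : Type*} [Field k] [CharZero k]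
    (I : Ideal (MvPolynomial (Fin 4) k))
    (hIhom : ∀ f ∈ I, ∀ n : ℕ, homogeneousComponent n f ∈ I)
    (d : ℕ) (hd : 1 ≤ d)
    (ℓ : MvPolynomial (Fin 4) k)
    (hℓ1 : ℓ ∈ homogeneousSubmodule (Fin 4) k 1)
    (hℓt : (3 : Fin 4) ∉ ℓ.vars)
    (hreg : ∀ g : MvPolynomial (Fin 4) k, ℓ * g ∈ I → g ∈ I)
    (hder : ∀ f ∈ I, f ∈ homogeneousSubmodule (Fin 4) k d →
      ℓ * pderiv (3 : Fin 4) f ∈ I) :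
    Submodule.span k {f : MvPolynomial (Fin 4) k |
        f ∈ I ∧ f ∈ homogeneousSubmodule (Fin 4) k d ∧
        ∃ i ≤ d, ∃ h : MvPolynomial (Fin 4) k,
          h ∈ homogeneousSubmodule (Fin 4) k i ∧ (3 : Fin 4) ∉ h.vars ∧
          f = X 3 ^ (d - i) * h} =
      Submodule.restrictScalars k I ⊓ homogeneousSubmodule (Fin 4) k d :=
  stmt_2_general I d ℓ hreg hder
end

section
/- Let P = ℂ[x,y,z,t] and S = ℂ[x,y,z] ⊆ P. For λ ∈ ℂ* let σ(λ) be the graded ℂ-algebra automorphism of P with x ↦ x, y ↦ y, z ↦ z, t ↦ λt, and for α ∈ ℂ and a fixed nonzero linear form ℓ ∈ S_1 let u_α be the graded automorphism with x ↦ x, y ↦ y, z ↦ z, t ↦ t + αℓ. Let I ⊆ P be a homogeneous ideal such that ℓ is a nonzerodivisor on P/I, and let d ≥ 1 be such that the degree-d component I_d ⊆ P_d is not invariant under the σ-action (there is λ_0 ∈ ℂ* with σ(λ_0)(I_d) ≠ I_d). Then for all but finitely many α ∈ ℂ the σ-isotropy of the subspace u_α(I_d) is trivial: for λ, μ ∈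 ℂ*, σ(λ)(u_α(I_d)) = σ(μ)(u_α(I_d)) implies λ = μ. -/
open MvPolynomial

/-- The graded `ℂ`-algebra endomorphism `σ(λ)` of `ℂ[x,y,z,t]` with
`x ↦ x, y ↦ y, z ↦ z, t ↦ λ·t` (the variable `t` is `X 3`). -/
noncomputable def sigmaAut (lam : ℂ) :
    MvPolynomial (Fin 4) ℂ →ₐ[ℂ] MvPolynomial (Fin 4) ℂ :=
  aeval fun i : Fin 4 => if i = 3 then C lam * X 3 else X i

/-- The graded `ℂ`-algebra endomorphism `u_α` of `ℂ[x,y,z,t]` with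
`x ↦ x, y ↦ y, z ↦ z, t ↦ t + α·ℓ`. -/
noncomputable def uAut (ℓ : MvPolynomial (Fin 4) ℂ) (α : ℂ) :
    MvPolynomial (Fin 4) ℂ →ₐ[ℂ] MvPolynomial (Fin 4) ℂ :=
  aeval fun i : Fin 4 => if i = 3 then X 3 + C α * ℓ else X i

/-- The degree-`d` component `I_d = I ∩ P_d` of an ideal `I ⊆ ℂ[x,y,z,t]`, as a
`ℂ`-subspace of the polynomial ring. -/
noncomputable def degPart (I : Ideal (MvPolynomial (Fin 4) ℂ)) (d : ℕ) :
    Submodule ℂ (MvPolynomial (Fin 4) ℂ) :=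
  Submodule.restrictScalars ℂ I ⊓ homogeneousSubmodule (Fin 4) ℂ d

/-!
Write `A(ν, c)` for the substitution `t ↦ ν t + c ℓ`. Since `ℓ` does not involve `t`, these compose
like affine maps of the line, with `σ(ν) = A(ν, 0)` and `u_c = A(1, c)`. If `σ(λ)(u_α(I_d)) =
σ(μ)(u_α(I_d))` with `λ ≠ μ`, then `A(ν, α (1 - ν))` stabilises `I_d` for `ν = λ / μ ≠ 1`. For two
such values `α ≠ α'` the commutator of the two stabilising maps is the translation `u_γ` with
`γ = (α' - α)(1 - ν)(1 - ν') ≠ 0`, so `I_d` is stable under all `u_{nγ}`.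

On the other hand, if `u_γ(I_d) = I_d` for infinitely many `γ`, write `f(t + s) = ∑ sᵐ fₘ`
for `f ∈ I_d`. Then `∑ γᵐ ℓᵐ fₘ = f(t + γ ℓ)` vanishes in `P/I` for infinitely many `γ`, so each
`ℓᵐ fₘ`, hence each `fₘ`, lies in `I`; therefore `f(ν t) = ∑ ((ν - 1) t)ᵐ fₘ ∈ I`, and `I_d` is
`σ`-invariant. So under the hypotheses at most one `α` is bad.
-/

open Polynomial in
theorem Submodule.mem_of_forall_sum_pow_smul_mem {K M : Type*} [Field K] [AddCommGroup M]
    [Module K M] {N : Submodule K M} {S : Set K} (hS : S.Infinite) (a : ℕ → M) (n : ℕ)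
    (h : ∀ γ ∈ S, ∑ m ∈ Finset.range n, γ ^ m • a m ∈ N) {m : ℕ} (hm : m < n) : a m ∈ N := by
  rw [← Submodule.Quotient.mk_eq_zero, ← Module.forall_dual_apply_eq_zero_iff K]
  intro φ
  let ψ := φ ∘ₗ N.mkQ
  let q : K[X] := ∑ k ∈ Finset.range n, monomial k (ψ (a k))
  have hq : q = 0 := by
    refine q.eq_zero_of_infinite_isRoot (hS.mono fun γ hγ => ?_)
    have : ψ (∑ m ∈ Finset.range n, γ ^ m • a m) = 0 := by
      rw [LinearMap.comp_apply, N.mkQ_apply, (Submodule.Quotient.mk_eq_zero N).2 (h γ hγ), map_zero]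
    rw [map_sum] at this
    simpa [q, eval_finsetSum, mul_comm] using this
  simpa [q, ψ, Polynomial.coeff_monomial, hm] using congrArg (·.coeff m) hq

theorem Ideal.mem_of_pow_mul_mem {R : Type*} [CommSemiring R] {I : Ideal R} {ℓ : R}
    (hreg : ∀ g, ℓ * g ∈ I → g ∈ I) (m : ℕ) {g : R} (h : ℓ ^ m * g ∈ I) : g ∈ I := by
  induction m generalizing g with
  | zero => simpa using h
  | succ m ih => exact hreg g (ih (by rwa [← mul_assoc, ← pow_succ]))

open Polynomial in
theorem Polynomial.eval_mem_of_coeff_mem {R : Type*} [CommSemiring R] {I : Ideal R} {p : R[X]}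
    (h : ∀ m, p.coeff m ∈ I) (c : R) : p.eval c ∈ I := by
  rw [eval_eq_sum_range]
  exact I.sum_mem fun m _ => I.mul_mem_right _ (h m)

local notation "P" => MvPolynomial (Fin 4) ℂ

noncomputable def tSubst (q : P) : P →ₐ[ℂ] P :=
  aeval fun i => if i = 3 then q else X i

@[simp]
theorem tSubst_X_three (q : P) : tSubst q (X 3) = q := by
  simp [tSubst]

theorem tSubst_X_of_ne (q : P) {i : Fin 4} (hi : i ≠ 3) : tSubst q (X i) = X i := by
  simp [tSubst, hi]

theorem tSubst_eq_self (q : P) {p : P} (hp : 3 ∉ p.vars) : tSubst q p = p := by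
  conv_rhs => rw [← aeval_X_left_apply p]
  exact eval₂Hom_congr' rfl (fun i hi _ => if_neg (ne_of_mem_of_not_mem hi hp)) rfl

theorem tSubst_comp_tSubst (q q' : P) : (tSubst q).comp (tSubst q') = tSubst (tSubst q q') := by
  refine algHom_ext fun i => ?_
  by_cases hi : i = 3
  · subst hi; simp
  · simp [tSubst_X_of_ne _ hi]

@[simp]
theorem tSubst_X : tSubst (X 3) = AlgHom.id ℂ P := by
  refine algHom_ext fun i => ?_
  by_cases hi : i = 3
  · subst hi; simp
  · simp [tSubst_X_of_ne _ hi]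

noncomputable def affineAut (ℓ : P) (ν c : ℂ) : P →ₐ[ℂ] P :=
  tSubst (C ν * X 3 + C c * ℓ)

theorem affineAut_comp_affineAut {ℓ : P} (hℓt : 3 ∉ ℓ.vars) (ν c ν' c' : ℂ) :
    (affineAut ℓ ν c).comp (affineAut ℓ ν' c') = affineAut ℓ (ν * ν') (ν' * c + c') := by
  simp only [affineAut, tSubst_comp_tSubst, map_add, map_mul, tSubst_X_three,
    tSubst_eq_self _ hℓt, algHom_C, algebraMap_eq]
  congr 1
  ring

theorem sigmaAut_eq_affineAut (ℓ : P) (ν : ℂ) : sigmaAut ν = affineAut ℓ ν 0 := by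
  simp only [affineAut, map_zero, zero_mul, add_zero]
  rfl

theorem uAut_eq_affineAut (ℓ : P) (c : ℂ) : uAut ℓ c = affineAut ℓ 1 c := by
  simp only [affineAut, map_one, one_mul]
  rfl

theorem affineAut_one_zero (ℓ : P) : affineAut ℓ 1 0 = AlgHom.id ℂ P := by
  simp [affineAut]

theorem map_affineAut_map {ℓ : P} (hℓt : 3 ∉ ℓ.vars) (W : Submodule ℂ P) {ν c ν' c' ν'' c'' : ℂ}
    (hν : ν * ν' = ν'') (hc : ν' * c + c' = c'') :
    (W.map (affineAut ℓ ν' c').toLinearMap).map (affineAut ℓ ν c).toLinearMap =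
      W.map (affineAut ℓ ν'' c'').toLinearMap := by
  rw [← Submodule.map_comp, ← AlgHom.comp_toLinearMap, affineAut_comp_affineAut hℓt, hν, hc]

theorem map_affineAut_one_zero (ℓ : P) (W : Submodule ℂ P) :
    W.map (affineAut ℓ 1 0).toLinearMap = W := by
  rw [affineAut_one_zero, AlgHom.toLinearMap_id, Submodule.map_id]

noncomputable def tShift : P →ₐ[ℂ] Polynomial P :=
  aeval fun i => if i = 3 then Polynomial.C (X 3) + Polynomial.X else Polynomial.C (X i)

theorem eval_tShift (c f : P) : (tShift f).eval c = tSubst (X 3 + c) f := by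
  have : ((Polynomial.aeval c).restrictScalars ℂ).comp tShift = tSubst (X 3 + c) := by
    refine algHom_ext fun i => ?_
    by_cases hi : i = 3
    · subst hi; simp [tShift]
    · simp [tShift, tSubst_X_of_ne _ hi, hi]
  simpa using DFunLike.congr_fun this f

theorem tSubst_mem_of_forall_uAut_mem {I : Ideal P} {ℓ : P} (hreg : ∀ g, ℓ * g ∈ I → g ∈ I)
    {S : Set ℂ} (hS : S.Infinite) {f : P} (hf : ∀ γ ∈ S, uAut ℓ γ f ∈ I) (q : P) :
    tSubst q f ∈ I := by
  have hcoeff (m : ℕ) : (tShift f).coeff m ∈ I := by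
    have hn : (tShift f).natDegree < (tShift f).natDegree + m + 1 := by omega
    refine Ideal.mem_of_pow_mul_mem hreg m <| Submodule.mem_of_forall_sum_pow_smul_mem
      (N := I.restrictScalars ℂ) hS (fun k => ℓ ^ k * (tShift f).coeff k) _ (fun γ hγ => ?_)
      (by omega : m < (tShift f).natDegree + m + 1)
    have : (tShift f).eval (C γ * ℓ) ∈ I := by rw [eval_tShift]; exact hf γ hγ
    rw [Polynomial.eval_eq_sum_range' hn] at this
    rw [Submodule.restrictScalars_mem]
    convert this using 2 with k
    rw [smul_eq_C_mul, mul_pow, map_pow]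
    ring
  have := Polynomial.eval_mem_of_coeff_mem hcoeff (q - X 3)
  rwa [eval_tShift, add_sub_cancel] at this

theorem map_sigmaAut_degPart_le {I : Ideal P} {ℓ : P} (hreg : ∀ g, ℓ * g ∈ I → g ∈ I) {d : ℕ}
    (hS : {γ | (degPart I d).map (uAut ℓ γ).toLinearMap = degPart I d}.Infinite) (ν : ℂ) :
    (degPart I d).map (sigmaAut ν).toLinearMap ≤ degPart I d := by
  rintro _ ⟨f, ⟨hfI, hfd⟩, rfl⟩
  refine ⟨tSubst_mem_of_forall_uAut_mem hreg hS (fun γ hγ => ?_) _, ?_⟩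
  · exact (hγ.le ⟨f, ⟨hfI, hfd⟩, rfl⟩).1
  · have hX : ∀ i, (if i = 3 then C ν * X 3 else X i : P).IsHomogeneous 1 := fun i => by
      split_ifs
      · exact (isHomogeneous_C _ ν).mul (isHomogeneous_X _ _)
      · exact isHomogeneous_X _ _
    exact one_mul d ▸ hfd.aeval _ hX

theorem map_sigmaAut_degPart {I : Ideal P} {ℓ : P} (hℓt : 3 ∉ ℓ.vars)
    (hreg : ∀ g, ℓ * g ∈ I → g ∈ I) {d : ℕ}
    (hS : {γ | (degPart I d).map (uAut ℓ γ).toLinearMap = degPart I d}.Infinite) {ν : ℂ}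
    (hν : ν ≠ 0) : (degPart I d).map (sigmaAut ν).toLinearMap = degPart I d := by
  refine le_antisymm (map_sigmaAut_degPart_le hreg hS ν) fun f hf => ?_
  have hinv := map_sigmaAut_degPart_le hreg hS ν⁻¹ ⟨f, hf, rfl⟩
  refine ⟨_, hinv, ?_⟩
  simp only [AlgHom.toLinearMap_apply, sigmaAut_eq_affineAut ℓ]
  rw [← AlgHom.comp_apply, affineAut_comp_affineAut hℓt]
  simp [hν, affineAut_one_zero]

theorem map_affineAut_eq_self_of_map_eq {ℓ : P} (hℓt : 3 ∉ ℓ.vars) {W : Submodule ℂ P}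
    {μ c μ' c' : ℂ} (hμ' : μ' ≠ 0)
    (h : W.map (affineAut ℓ μ c).toLinearMap = W.map (affineAut ℓ μ' c').toLinearMap) :
    W.map (affineAut ℓ (μ / μ') (c - μ * c' / μ')).toLinearMap = W := by
  calc W.map (affineAut ℓ (μ / μ') (c - μ * c' / μ')).toLinearMap
      = (W.map (affineAut ℓ μ c).toLinearMap).map (affineAut ℓ μ'⁻¹ (-c' / μ')).toLinearMap :=
        (map_affineAut_map hℓt W (by field_simp) (by ring)).symm
    _ = (W.map (affineAut ℓ μ' c').toLinearMap).map (affineAut ℓ μ'⁻¹ (-c' / μ')).toLinearMap :=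
        by rw [h]
    _ = W.map (affineAut ℓ 1 0).toLinearMap :=
        map_affineAut_map hℓt W (inv_mul_cancel₀ hμ') (by field_simp; ring)
    _ = W := map_affineAut_one_zero ℓ W

theorem exists_map_affineAut_eq_self_of_isotropy {ℓ : P} (hℓt : 3 ∉ ℓ.vars)
    {W : Submodule ℂ P} {α lam mu : ℂ} (hlam : lam ≠ 0) (hmu : mu ≠ 0) (hne : lam ≠ mu)
    (h : (W.map (uAut ℓ α).toLinearMap).map (sigmaAut lam).toLinearMap =
      (W.map (uAut ℓ α).toLinearMap).map (sigmaAut mu).toLinearMap) :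
    ∃ ν : ℂ, ν ≠ 0 ∧ ν ≠ 1 ∧ W.map (affineAut ℓ ν (α * (1 - ν))).toLinearMap = W := by
  rw [uAut_eq_affineAut, sigmaAut_eq_affineAut ℓ, sigmaAut_eq_affineAut ℓ,
    map_affineAut_map hℓt W (mul_one lam) (by ring : 1 * 0 + α = α),
    map_affineAut_map hℓt W (mul_one mu) (by ring : 1 * 0 + α = α)] at h
  refine ⟨lam / mu, div_ne_zero hlam hmu, by rwa [Ne, div_eq_one_iff_eq hmu], ?_⟩
  rw [show α * (1 - lam / mu) = α - lam * α / mu by ring]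
  exact map_affineAut_eq_self_of_map_eq hℓt hmu h

theorem map_uAut_eq_self_of_map_affineAut_eq_self {ℓ : P} (hℓt : 3 ∉ ℓ.vars)
    {W : Submodule ℂ P} {ν ν' a a' : ℂ} (hν : ν ≠ 0) (hν' : ν' ≠ 0)
    (h : W.map (affineAut ℓ ν a).toLinearMap = W)
    (h' : W.map (affineAut ℓ ν' a').toLinearMap = W) :
    W.map (uAut ℓ (a' * (1 - ν) - a * (1 - ν'))).toLinearMap = W := by
  have h₁ : W.map (affineAut ℓ (ν * ν') (ν' * a + a')).toLinearMap = W := by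
    rw [← map_affineAut_map hℓt W rfl rfl, h', h]
  have h₂ : W.map (affineAut ℓ (ν * ν') (ν * a' + a)).toLinearMap = W := by
    rw [← map_affineAut_map hℓt W (mul_comm ν' ν) rfl, h, h']
  have := map_affineAut_eq_self_of_map_eq hℓt (mul_ne_zero hν hν') (h₁.trans h₂.symm)
  rwa [div_self (mul_ne_zero hν hν'), mul_div_cancel_left₀ _ (mul_ne_zero hν hν'),
    show ν' * a + a' - (ν * a' + a) = a' * (1 - ν) - a * (1 - ν') by ring,
    ← uAut_eq_affineAut] at this

theorem infinite_setOf_map_uAut_eq_self {ℓ : P} (hℓt : 3 ∉ ℓ.vars) {W : Submodule ℂ P} {γ : ℂ}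
    (hγ0 : γ ≠ 0) (hγ : W.map (uAut ℓ γ).toLinearMap = W) :
    {γ | W.map (uAut ℓ γ).toLinearMap = W}.Infinite := by
  refine Set.infinite_of_injective_forall_mem
    ((mul_left_injective₀ hγ0).comp Nat.cast_injective) fun n => ?_
  induction n with
  | zero => simpa [uAut_eq_affineAut] using map_affineAut_one_zero ℓ W
  | succ n ih =>
    simp only [Set.mem_ofPred_eq, Function.comp_apply, uAut_eq_affineAut] at ih hγ ⊢
    rw [← map_affineAut_map hℓt W (ν := 1) (c := γ) (c' := n * γ) (one_mul 1) (by push_cast; ring),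
      ih, hγ]

theorem stmt_4_general (I : Ideal (MvPolynomial (Fin 4) ℂ))
    (ℓ : MvPolynomial (Fin 4) ℂ)
    (hℓt : (3 : Fin 4) ∉ ℓ.vars)
    (hreg : ∀ g : MvPolynomial (Fin 4) ℂ, ℓ * g ∈ I → g ∈ I)
    (d : ℕ)
    (hnotinv : ∃ lam : ℂ, lam ≠ 0 ∧
      Submodule.map (sigmaAut lam).toLinearMap (degPart I d) ≠ degPart I d) :
    {α : ℂ | ¬ ∀ lam mu : ℂ, lam ≠ 0 → mu ≠ 0 →
        Submodule.map (sigmaAut lam).toLinearMap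
            (Submodule.map (uAut ℓ α).toLinearMap (degPart I d)) =
          Submodule.map (sigmaAut mu).toLinearMap
            (Submodule.map (uAut ℓ α).toLinearMap (degPart I d)) →
        lam = mu}.Finite := by
  obtain ⟨lam₀, hlam₀, hnot⟩ := hnotinv
  have htriv {γ : ℂ} (hγ : (degPart I d).map (uAut ℓ γ).toLinearMap = degPart I d) : γ = 0 :=
    by_contra fun hγ0 =>
      hnot (map_sigmaAut_degPart hℓt hreg (infinite_setOf_map_uAut_eq_self hℓt hγ0 hγ) hlam₀)
  refine Set.Subsingleton.finite fun α hα α' hα' => ?_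
  push Not at hα hα'
  obtain ⟨lam, mu, hlam, hmu, h, hne⟩ := hα
  obtain ⟨lam', mu', hlam', hmu', h', hne'⟩ := hα'
  obtain ⟨ν, hν0, hν1, hν⟩ := exists_map_affineAut_eq_self_of_isotropy hℓt hlam hmu hne h
  obtain ⟨ν', hν'0, hν'1, hν'⟩ := exists_map_affineAut_eq_self_of_isotropy hℓt hlam' hmu' hne' h'
  have := htriv (map_uAut_eq_self_of_map_affineAut_eq_self hℓt hν0 hν'0 hν hν')
  have hprod : (α' - α) * ((1 - ν) * (1 - ν')) = 0 := by linear_combination this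
  have hunit : (1 - ν) * (1 - ν') ≠ 0 :=
    mul_ne_zero (sub_ne_zero.2 hν1.symm) (sub_ne_zero.2 hν'1.symm)
  exact (sub_eq_zero.1 ((mul_eq_zero.1 hprod).resolve_right hunit)).symm

/-- Let `I ⊆ P = ℂ[x,y,z,t]` be a homogeneous ideal, `ℓ ∈ ℂ[x,y,z]₁` a
nonzero linear form that is a nonzerodivisor on `P/I`, and `d ≥ 1` such that `I_d` is not
invariant under the `𝔾ₘ`-action `σ`.  Then for all but finitely many `α ∈ ℂ` the
`σ`-isotropy of `u_α(I_d)` is trivial: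
`σ(λ)(u_α(I_d)) = σ(μ)(u_α(I_d))` with `λ, μ ∈ ℂ*` implies `λ = μ`. -/
theorem stmt_4 (I : Ideal (MvPolynomial (Fin 4) ℂ))
    (hIhom : ∀ f ∈ I, ∀ n : ℕ, homogeneousComponent n f ∈ I)
    (ℓ : MvPolynomial (Fin 4) ℂ) (hℓ0 : ℓ ≠ 0)
    (hℓ1 : ℓ ∈ homogeneousSubmodule (Fin 4) ℂ 1)
    (hℓt : (3 : Fin 4) ∉ ℓ.vars)
    (hreg : ∀ g : MvPolynomial (Fin 4) ℂ, ℓ * g ∈ I → g ∈ I)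
    (d : ℕ) (hd : 1 ≤ d)
    (hnotinv : ∃ lam : ℂ, lam ≠ 0 ∧
      Submodule.map (sigmaAut lam).toLinearMap (degPart I d) ≠ degPart I d) :
    {α : ℂ | ¬ ∀ lam mu : ℂ, lam ≠ 0 → mu ≠ 0 →
        Submodule.map (sigmaAut lam).toLinearMap
            (Submodule.map (uAut ℓ α).toLinearMap (degPart I d)) =
          Submodule.map (sigmaAut mu).toLinearMap
            (Submodule.map (uAut ℓ α).toLinearMap (degPart I d)) →
        lam = mu}.Finite :=
  stmt_4_general I ℓ hℓt hreg d hnotinv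
end

section
/- Let k be a field, S = k[X_0,X_1,X_2,X_3], and let ℓ ∈ S_1 be a nonzero linear form. Let h_1, …, h_m ∈ S_1 be linear forms such that for each i the pair (ℓ, h_i) is linearly independent and for all i ≠ j the triple (ℓ, h_i, h_j) is linearly independent (equivalently, the images of the h_i in S/ℓS are pairwise non-proportional nonzero linear forms). Let I = ⋂_{i=1}^m (ℓ, h_i). Then the homogeneous components of I are: I_n = ℓ·S_{n-1} if n < m, and I_n = ℓ·S_{n-1} + h_1⋯h_m·S_{n-m} if n ≥ m. -/
open MvPolynomial

/-- The space of homogeneous forms of (integer) degree `n` in `k[X₀,…]`, with the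
convention that it is `0` for negative `n`. -/
noncomputable def homDegZ (k : Type*) [CommSemiring k] (σ : Type*) (n : ℤ) :
    Submodule k (MvPolynomial σ k) :=
  if 0 ≤ n then homogeneousSubmodule σ k n.toNat else ⊥

/-!
A linear change of coordinates turns two independent linear forms into `X₀, X₁`, so each
`(ℓ, hᵢ)` is prime, and comparing linear parts shows `hⱼ ∉ (ℓ, hᵢ)` for `j ≠ i`. Hence
`⋂ᵢ (ℓ, hᵢ) = (ℓ, h₁⋯h_m)`: if `f = cℓ + dQ` also lies in the prime `(ℓ, h)` and `Q ∉ (ℓ, h)`,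
then `d ∈ (ℓ, h)`, so `f ∈ (ℓ, hQ)`. Finally, the degree-`n` part of an ideal `(p, q)` with
`p, q` homogeneous of degrees `d, e` is `p·S_{n-d} + q·S_{n-e}`: take the degree-`n` component
of `f = up + vq`.
-/

section HomogeneousComponents

variable {k σ : Type*} [CommSemiring k]

theorem homogeneousComponent_mul_of_isHomogeneous {p : MvPolynomial σ k} {d : ℕ}
    (hp : p.IsHomogeneous d) (g : MvPolynomial σ k) (n : ℕ) :
    homogeneousComponent n (p * g) =
      if d ≤ n then p * homogeneousComponent (n - d) g else 0 := by
  classical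
  let _ := gradedAlgebra (σ := σ) (R := k)
  simpa [← decomposition.decompose'_apply] using
    DirectSum.coe_decompose_mul_of_left_mem (𝒜 := homogeneousSubmodule σ k) (b := g) n hp

theorem homDegZ_natCast_sub_of_le {n d : ℕ} (h : d ≤ n) :
    homDegZ k σ (n - d) = homogeneousSubmodule σ k (n - d) := by
  rw [homDegZ, if_pos (by omega)]
  congr
  omega

theorem homDegZ_natCast_sub_of_lt {n d : ℕ} (h : n < d) : homDegZ k σ (n - d) = ⊥ :=
  if_neg (by omega)

theorem map_mulLeft_homDegZ_le {p : MvPolynomial σ k} {d : ℕ} (hp : p.IsHomogeneous d)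
    (n : ℕ) : (homDegZ k σ (n - d)).map (LinearMap.mulLeft k p) ≤ homogeneousSubmodule σ k n := by
  rcases le_or_gt d n with h | h
  · rintro _ ⟨g, hg, rfl⟩
    rw [homDegZ_natCast_sub_of_le h] at hg
    simpa [Nat.add_sub_cancel' h] using hp.mul hg
  · simp [homDegZ_natCast_sub_of_lt h]

theorem homogeneousComponent_mul_mem_map_mulLeft_homDegZ {p : MvPolynomial σ k} {d : ℕ}
    (hp : p.IsHomogeneous d) (g : MvPolynomial σ k) (n : ℕ) :
    homogeneousComponent n (p * g) ∈ (homDegZ k σ (n - d)).map (LinearMap.mulLeft k p) := by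
  rw [homogeneousComponent_mul_of_isHomogeneous hp]
  split_ifs with h
  · rw [homDegZ_natCast_sub_of_le h]
    exact ⟨_, homogeneousComponent_mem _ _, rfl⟩
  · exact zero_mem _

theorem restrictScalars_span_pair_inf_homogeneousSubmodule {p q : MvPolynomial σ k} {d e : ℕ}
    (hp : p.IsHomogeneous d) (hq : q.IsHomogeneous e) (n : ℕ) :
    (Ideal.span {p, q}).restrictScalars k ⊓ homogeneousSubmodule σ k n =
      (homDegZ k σ (n - d)).map (LinearMap.mulLeft k p) ⊔
        (homDegZ k σ (n - e)).map (LinearMap.mulLeft k q) := by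
  refine le_antisymm ?_ (sup_le (le_inf ?_ (map_mulLeft_homDegZ_le hp n))
    (le_inf ?_ (map_mulLeft_homDegZ_le hq n)))
  · rintro f ⟨hf, hfn⟩
    obtain ⟨u, v, rfl⟩ := Ideal.mem_span_pair.mp hf
    rw [← homogeneousComponent_eq_self hfn, map_add, mul_comm u, mul_comm v]
    exact Submodule.add_mem_sup (homogeneousComponent_mul_mem_map_mulLeft_homDegZ hp u n)
      (homogeneousComponent_mul_mem_map_mulLeft_homDegZ hq v n)
  all_goals
    rintro _ ⟨g, -, rfl⟩
    exact Ideal.mul_mem_right _ _ (Ideal.subset_span (by simp))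

theorem notMem_span_pair_of_linearIndependent {k : Type*} [CommRing k] [Nontrivial k]
    {ℓ h g : MvPolynomial σ k} (hℓ : ℓ.IsHomogeneous 1) (hh : h.IsHomogeneous 1)
    (hg : g.IsHomogeneous 1) (hind : LinearIndependent k ![ℓ, h, g]) :
    g ∉ Ideal.span {ℓ, h} := by
  intro hmem
  obtain ⟨u, v, huv⟩ := Ideal.mem_span_pair.mp hmem
  -- the degree-one component of `g = uℓ + vh` only sees the constant terms of `u` and `v`
  have hlin : g = coeff 0 u • ℓ + coeff 0 v • h := by
    have := congrArg (homogeneousComponent 1) huv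
    simp only [map_add, mul_comm _ ℓ, mul_comm _ h, homogeneousComponent_mul_of_isHomogeneous hℓ,
      homogeneousComponent_mul_of_isHomogeneous hh, homogeneousComponent_eq_self hg] at this
    simpa [homogeneousComponent_zero, smul_eq_C_mul, mul_comm] using this.symm
  have := Fintype.linearIndependent_iff.mp hind ![coeff 0 u, coeff 0 v, -1]
    (by simp [Fin.sum_univ_three, hlin]; abel)
  simpa using this 2

end HomogeneousComponents

section IdealsOfPairs

variable {R : Type*} [CommRing R]

theorem span_pair_inf_span_pair_eq_span_pair_mul {ℓ g q : R}
    (hg : (Ideal.span {ℓ, g}).IsPrime) (hq : q ∉ Ideal.span {ℓ, g}) :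
    Ideal.span {ℓ, g} ⊓ Ideal.span {ℓ, q} = Ideal.span {ℓ, g * q} := by
  refine le_antisymm ?_ (le_inf ?_ ?_)
  · rintro f ⟨hfg, hfq⟩
    obtain ⟨c, d, rfl⟩ := Ideal.mem_span_pair.mp hfq
    have hdq : d * q ∈ Ideal.span {ℓ, g} :=
      (Ideal.add_mem_iff_right _ (Ideal.mul_mem_left _ c (Ideal.subset_span (by simp)))).mp hfg
    obtain ⟨c', d', rfl⟩ := Ideal.mem_span_pair.mp ((hg.mem_or_mem hdq).resolve_right hq)
    exact Ideal.mem_span_pair.mpr ⟨c + c' * q, d', by ring⟩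
  all_goals
    refine Ideal.span_le.mpr (Set.insert_subset (Ideal.subset_span (by simp)) ?_)
    rw [Set.singleton_subset_iff, SetLike.mem_coe, Ideal.mem_span_pair]
  · exact ⟨0, q, by ring⟩
  · exact ⟨0, g, by ring⟩

theorem iInf_span_pair_eq_span_pair_prod {ι : Type*} {ℓ : R} {h : ι → R}
    (hprime : ∀ i, (Ideal.span {ℓ, h i}).IsPrime)
    (hnot : ∀ i j, i ≠ j → h j ∉ Ideal.span {ℓ, h i}) (s : Finset ι) :
    ⨅ i ∈ s, Ideal.span {ℓ, h i} = Ideal.span {ℓ, ∏ i ∈ s, h i} := by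
  classical
  induction s using Finset.induction_on with
  | empty =>
    simpa using (Ideal.eq_top_of_isUnit_mem _ (Ideal.subset_span (by simp)) isUnit_one).symm
  | insert a s has ih =>
    have hprod : ∏ i ∈ s, h i ∉ Ideal.span {ℓ, h a} := fun hmem => by
      obtain ⟨i, hi, hmem⟩ := (hprime a).prod_mem_iff.mp hmem
      exact hnot a i (ne_of_mem_of_not_mem hi has).symm hmem
    rw [Finset.iInf_insert, ih, Finset.prod_insert has,
      span_pair_inf_span_pair_eq_span_pair_mul (hprime a) hprod]

end IdealsOfPairs

section LinearSubstitution

theorem isPrime_span_X_image {R σ : Type*} [CommRing R] [IsDomain R] (s : Set σ) :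
    (Ideal.span (X '' s : Set (MvPolynomial σ R))).IsPrime := by
  classical
  set J := Ideal.span (X '' s : Set (MvPolynomial σ R))
  let ρ : MvPolynomial σ R →ₐ[R] MvPolynomial σ R := aeval fun i => if i ∈ s then 0 else X i
  have hρ : (Ideal.Quotient.mkₐ R J).comp ρ = Ideal.Quotient.mkₐ R J := by
    refine algHom_ext fun i => ?_
    by_cases hi : i ∈ s
    · simpa [ρ, hi, eq_comm (a := (0 : _ ⧸ J)), Ideal.Quotient.eq_zero_iff_mem] using
        Ideal.subset_span (Set.mem_image_of_mem X hi)
    · simp [ρ, hi]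
  have hker : RingHom.ker ρ = J := by
    refine le_antisymm (fun p hp => ?_) (Ideal.span_le.mpr ?_)
    · rw [← Ideal.Quotient.eq_zero_iff_mem, ← Ideal.Quotient.mkₐ_eq_mk R, ← hρ,
        AlgHom.comp_apply, RingHom.mem_ker.mp hp, map_zero]
    · rintro _ ⟨i, hi, rfl⟩
      simp [ρ, hi]
  exact hker ▸ RingHom.ker_isPrime ρ

variable {k σ ι : Type*} [CommSemiring k] [Fintype σ]

variable (k σ) in
noncomputable abbrev linearForm : (σ → k) →ₗ[k] MvPolynomial σ k :=
  Fintype.linearCombination k X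

theorem range_linearForm : LinearMap.range (linearForm k σ) = homogeneousSubmodule σ k 1 := by
  rw [Fintype.range_linearCombination, homogeneousSubmodule_one_eq_span_X]

variable [DecidableEq ι]

noncomputable def linearSubst (L : (ι → k) →ₗ[k] (σ → k)) :
    MvPolynomial ι k →ₐ[k] MvPolynomial σ k :=
  aeval fun i => linearForm k σ (L (Pi.single i 1))

@[simp] theorem linearSubst_X (L : (ι → k) →ₗ[k] (σ → k)) (i : ι) :
    linearSubst L (X i) = linearForm k σ (L (Pi.single i 1)) :=
  aeval_X _ _

theorem linearSubst_linearForm [Fintype ι] (L : (ι → k) →ₗ[k] (σ → k)) (c : ι → k) :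
    linearSubst L (linearForm k ι c) = linearForm k σ (L c) := by
  have : (linearSubst L).toLinearMap ∘ₗ linearForm k ι = linearForm k σ ∘ₗ L := by
    refine LinearMap.pi_ext fun i a => ?_
    rw [show Pi.single i a = a • Pi.single i (1 : k) by simp [← Pi.single_smul]]
    simp
  exact LinearMap.congr_fun this c

theorem linearSubst_comp [Fintype ι] {τ : Type*} [Fintype τ] [DecidableEq σ]
    (L : (ι → k) →ₗ[k] (σ → k)) (L' : (σ → k) →ₗ[k] (τ → k)) :
    (linearSubst L').comp (linearSubst L) = linearSubst (L' ∘ₗ L) :=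
  algHom_ext fun i => by simp [linearSubst_linearForm]

theorem linearSubst_id [Fintype ι] :
    linearSubst (LinearMap.id : (ι → k) →ₗ[k] (ι → k)) = AlgHom.id k _ :=
  algHom_ext fun i => by simp

noncomputable def linearSubstEquiv [Fintype ι] [DecidableEq σ] (L : (ι → k) ≃ₗ[k] (σ → k)) :
    MvPolynomial ι k ≃ₐ[k] MvPolynomial σ k :=
  AlgEquiv.ofAlgHom (linearSubst L) (linearSubst L.symm)
    (by rw [linearSubst_comp]; simp [linearSubst_id])
    (by rw [linearSubst_comp]; simp [linearSubst_id])

end LinearSubstitution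

theorem isPrime_span_range_of_linearIndependent {k σ ι : Type*} [Field k] [Fintype σ]
    {v : ι → MvPolynomial σ k} (hv1 : ∀ i, v i ∈ homogeneousSubmodule σ k 1)
    (hv : LinearIndependent k v) : (Ideal.span (Set.range v)).IsPrime := by
  classical
  choose w hw using fun i => (range_linearForm (k := k) (σ := σ) ▸ hv1 i : v i ∈ LinearMap.range _)
  have hw' : LinearIndependent k w :=
    .of_comp (linearForm k σ) (by rwa [show linearForm k σ ∘ w = v from funext hw])
  let B := Module.Basis.sumExtend hw'
  have : Fintype (ι ⊕ Module.Basis.sumExtendIndex hw') := FiniteDimensional.fintypeBasisIndex B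
  -- in the coordinates given by `B`, the forms `v i` become the variables `X (Sum.inl i)`
  let Φ := linearSubstEquiv B.equivFun.symm
  have hΦ : ∀ i, Φ (X (Sum.inl i)) = v i := fun i => by
    simp [Φ, linearSubstEquiv, ← hw i, B, Module.Basis.sumExtend]
    rfl
  have hspan : Ideal.span (Set.range v) = (Ideal.span (X '' Set.range Sum.inl)).map Φ := by
    rw [Ideal.map_span, ← Set.range_comp, ← Set.range_comp]
    exact congrArg _ (congrArg _ (funext hΦ)).symm
  have := isPrime_span_X_image (R := k)
    (Set.range (Sum.inl : ι → ι ⊕ Module.Basis.sumExtendIndex hw'))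
  rw [hspan]
  exact Ideal.map_isPrime_of_equiv Φ

theorem stmt_6_general {k : Type*} [Field k]
    (ℓ : MvPolynomial (Fin 4) k)
    (hℓ1 : ℓ ∈ homogeneousSubmodule (Fin 4) k 1)
    (m : ℕ) (h : Fin m → MvPolynomial (Fin 4) k)
    (hh1 : ∀ i, h i ∈ homogeneousSubmodule (Fin 4) k 1)
    (hpair : ∀ i, LinearIndependent k ![ℓ, h i])
    (htriple : ∀ i j, i ≠ j → LinearIndependent k ![ℓ, h i, h j])
    (I : Ideal (MvPolynomial (Fin 4) k)) (hI : I = ⨅ i, Ideal.span {ℓ, h i}) :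
    ∀ n : ℕ,
      (n < m →
        Submodule.restrictScalars k I ⊓ homogeneousSubmodule (Fin 4) k n =
          Submodule.map (LinearMap.mulLeft k ℓ) (homDegZ k (Fin 4) ((n : ℤ) - 1))) ∧
      (m ≤ n →
        Submodule.restrictScalars k I ⊓ homogeneousSubmodule (Fin 4) k n =
          Submodule.map (LinearMap.mulLeft k ℓ) (homDegZ k (Fin 4) ((n : ℤ) - 1)) ⊔
            Submodule.map (LinearMap.mulLeft k (∏ i, h i))
              (homDegZ k (Fin 4) ((n : ℤ) - (m : ℤ)))) := by
  have hprime : ∀ i, (Ideal.span {ℓ, h i}).IsPrime := fun i => by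
    have := isPrime_span_range_of_linearIndependent (Fin.forall_fin_two.mpr ⟨hℓ1, hh1 i⟩)
      (hpair i)
    rwa [Matrix.range_cons_cons_empty] at this
  have hnot : ∀ i j, i ≠ j → h j ∉ Ideal.span {ℓ, h i} := fun i j hij =>
    notMem_span_pair_of_linearIndependent hℓ1 (hh1 i) (hh1 j) (htriple i j hij)
  have hI' : I = Ideal.span {ℓ, ∏ i, h i} := by
    rw [hI, ← iInf_span_pair_eq_span_pair_prod hprime hnot]
    simp
  have hprod : (∏ i, h i).IsHomogeneous m := by
    simpa using IsHomogeneous.prod Finset.univ h (fun _ => 1) fun i _ => hh1 i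
  intro n
  rw [hI', restrictScalars_span_pair_inf_homogeneousSubmodule hℓ1 hprod n, Nat.cast_one]
  refine ⟨fun hnm => ?_, fun _ => rfl⟩
  rw [homDegZ_natCast_sub_of_lt hnm, Submodule.map_bot, sup_bot_eq]

/-- Let `S = k[X₀,X₁,X₂,X₃]`, `ℓ ∈ S₁` nonzero, and `h₁, …, h_m ∈ S₁`
linear forms with each `(ℓ, hᵢ)` linearly independent and each `(ℓ, hᵢ, hⱼ)` (`i ≠ j`)
linearly independent.  For `I = ⋂ᵢ (ℓ, hᵢ)` the homogeneous components are
`I_n = ℓ·S_{n-1}` for `n < m` and `I_n = ℓ·S_{n-1} + h₁⋯h_m·S_{n-m}` for `n ≥ m`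
(with the convention `S_j = 0` for `j < 0`). -/
theorem stmt_6 {k : Type*} [Field k]
    (ℓ : MvPolynomial (Fin 4) k) (hℓ0 : ℓ ≠ 0)
    (hℓ1 : ℓ ∈ homogeneousSubmodule (Fin 4) k 1)
    (m : ℕ) (h : Fin m → MvPolynomial (Fin 4) k)
    (hh1 : ∀ i, h i ∈ homogeneousSubmodule (Fin 4) k 1)
    (hpair : ∀ i, LinearIndependent k ![ℓ, h i])
    (htriple : ∀ i j, i ≠ j → LinearIndependent k ![ℓ, h i, h j])
    (I : Ideal (MvPolynomial (Fin 4) k)) (hI : I = ⨅ i, Ideal.span {ℓ, h i}) :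
    ∀ n : ℕ,
      (n < m →
        Submodule.restrictScalars k I ⊓ homogeneousSubmodule (Fin 4) k n =
          Submodule.map (LinearMap.mulLeft k ℓ) (homDegZ k (Fin 4) ((n : ℤ) - 1))) ∧
      (m ≤ n →
        Submodule.restrictScalars k I ⊓ homogeneousSubmodule (Fin 4) k n =
          Submodule.map (LinearMap.mulLeft k ℓ) (homDegZ k (Fin 4) ((n : ℤ) - 1)) ⊔
            Submodule.map (LinearMap.mulLeft k (∏ i, h i))
              (homDegZ k (Fin 4) ((n : ℤ) - (m : ℤ)))) :=
  stmt_6_general ℓ hℓ1 m h hh1 hpair htriple I hI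
end

section
/- Let k be a field of characteristic zero, S = k[x,y,z,t], and d ≥ 1. Suppose ψ : S_d → S_d is a k-linear endomorphism such that for all linearly independent linear forms ℓ, h ∈ S_1 one has ψ(ℓ·S_{d-1} + h·S_{d-1}) ⊆ ℓ·S_{d-1} + h·S_{d-1}. Then ψ(ℓ·S_{d-1}) ⊆ ℓ·S_{d-1} for every linear form ℓ ∈ S_1. -/
open MvPolynomial Module

/-!
If `ℓ(p) = 0`, then, as there are at least three variables, some linear form `h` independent
of `ℓ` also vanishes at `p`; since `ψ f ∈ (ℓ, h)`, `ψ f` vanishes at `p`. Thus `ψ f` vanishes on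
the hyperplane `ℓ = 0`, and over an infinite field this forces `ℓ ∣ ψ f`: the substitution
`X j ↦ X j - ℓ / c j` (with `c j ≠ 0` a coefficient of `ℓ`) kills `ℓ`, hence `ψ f`, and is the
identity modulo `ℓ`. Finally the cofactor may be replaced by its component of degree `d - 1`.
-/

theorem LinearMap.exists_mem_ker_linearIndependent_pair {K V : Type*} [Field K] [AddCommGroup V]
    [Module K V] [FiniteDimensional K V] (hV : 3 ≤ finrank K V) (φ : V →ₗ[K] K) {c : V}
    (hc : c ≠ 0) : ∃ b ∈ LinearMap.ker φ, LinearIndependent K ![c, b] := by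
  have hker : ¬ LinearMap.ker φ ≤ K ∙ c := by
    intro hle
    have h_ker_le := Submodule.finrank_mono hle
    have h_rank_nullity := LinearMap.finrank_range_add_finrank_ker φ
    have h_range : finrank K (LinearMap.range φ) ≤ 1 :=
      (Submodule.finrank_le _).trans_eq (finrank_self K)
    rw [finrank_span_singleton hc] at h_ker_le
    omega
  obtain ⟨b, hb, hbc⟩ := SetLike.not_le_iff_exists.1 hker
  refine ⟨b, hb, (LinearIndependent.pair_iff' hc).2 fun a hab => hbc ?_⟩
  rw [← hab]
  exact Submodule.smul_mem _ a (Submodule.mem_span_singleton_self c)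

namespace MvPolynomial

section CommRing

variable {σ R : Type*} [CommRing R]

theorem eval_aeval_eq_eval (p : σ → R) (F : σ → MvPolynomial σ R) (g : MvPolynomial σ R) :
    eval p (aeval F g) = eval (fun i => eval p (F i)) g := by
  rw [aeval_eq_bind₁]
  exact eval₂Hom_bind₁ _ _ _ _

theorem eval_eq_zero_of_mem_sup_map_mulLeft {ℓ h f : MvPolynomial σ R}
    {A B : Submodule R (MvPolynomial σ R)} {p : σ → R}
    (hf : f ∈ A.map (LinearMap.mulLeft R ℓ) ⊔ B.map (LinearMap.mulLeft R h))
    (hℓ : eval p ℓ = 0) (hh : eval p h = 0) : eval p f = 0 := by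
  obtain ⟨_, ⟨a, -, rfl⟩, _, ⟨b, -, rfl⟩, rfl⟩ := Submodule.mem_sup.1 hf
  simp [hℓ, hh]

attribute [local instance] gradedAlgebra in
theorem mem_map_mulLeft_homogeneousSubmodule_of_mem_span_singleton {ℓ g : MvPolynomial σ R}
    {m n : ℕ} (hℓ : ℓ ∈ homogeneousSubmodule σ R m) (hg : g ∈ homogeneousSubmodule σ R (m + n))
    (h : g ∈ Ideal.span {ℓ}) :
    g ∈ (homogeneousSubmodule σ R n).map (LinearMap.mulLeft R ℓ) := by
  obtain ⟨q, rfl⟩ := Ideal.mem_span_singleton.1 h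
  refine ⟨homogeneousComponent n q, homogeneousComponent_mem n q, ?_⟩
  have key : homogeneousComponent (m + n) (ℓ * q) = ℓ * homogeneousComponent n q := by
    simpa only [← decomposition.decompose'_apply, DirectSum.Decomposition.decompose'_eq] using
      DirectSum.coe_decompose_mul_add_of_left_mem (homogeneousSubmodule σ R) (b := q) (j := n) hℓ
  rw [LinearMap.mulLeft_apply, ← key, homogeneousComponent_eq_self hg]

theorem finrank_homogeneousSubmodule_one [Fintype σ] [Nontrivial R] :
    finrank R (homogeneousSubmodule σ R 1) = Fintype.card σ := by
  rw [homogeneousSubmodule_one_eq_span_X, finrank_span_eq_card (linearIndependent_X σ R)]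

end CommRing

section Field

variable {σ k : Type*} [Fintype σ] [Field k]

theorem exists_mem_homogeneousSubmodule_one_eval_eq_zero_linearIndependent
    (hσ : 3 ≤ Fintype.card σ) {ℓ : MvPolynomial σ k} (hℓ : ℓ ∈ homogeneousSubmodule σ k 1)
    (hℓ0 : ℓ ≠ 0) (p : σ → k) :
    ∃ h ∈ homogeneousSubmodule σ k 1, eval p h = 0 ∧ LinearIndependent k ![ℓ, h] := by
  set V := homogeneousSubmodule σ k 1
  have hV : finrank k V = Fintype.card σ := finrank_homogeneousSubmodule_one
  have : FiniteDimensional k V := Module.finite_of_finrank_pos (by omega)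
  obtain ⟨b, hb, hind⟩ :=
    ((aeval p).toLinearMap.comp V.subtype).exists_mem_ker_linearIndependent_pair
      (hV ▸ hσ) (c := ⟨ℓ, hℓ⟩) (by simpa using hℓ0)
  refine ⟨b, b.2, by simpa [coe_aeval_eq_eval] using hb, ?_⟩
  have hmap := hind.map' V.subtype V.ker_subtype
  rwa [show V.subtype ∘ ![⟨ℓ, hℓ⟩, b] = ![ℓ, b] by ext i; fin_cases i <;> rfl] at hmap

theorem mem_span_singleton_of_eval_eq_zero [Infinite k] {ℓ g : MvPolynomial σ k}
    (hℓ : ℓ ∈ homogeneousSubmodule σ k 1) (hℓ0 : ℓ ≠ 0)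
    (hg : ∀ p : σ → k, eval p ℓ = 0 → eval p g = 0) : g ∈ Ideal.span {ℓ} := by
  classical
  rw [homogeneousSubmodule_one_eq_span_X, Submodule.mem_span_range_iff_exists_fun] at hℓ
  obtain ⟨c, rfl⟩ := hℓ
  obtain ⟨j, hj⟩ : ∃ j, c j ≠ 0 := by
    by_contra! hc
    simp [hc] at hℓ0
  set ℓ : MvPolynomial σ k := ∑ i, c i • X i
  set F : σ → MvPolynomial σ k := fun i => X i - if i = j then (c j)⁻¹ • ℓ else 0
  have hFℓ : aeval F ℓ = 0 := by
    simp [ℓ, F, smul_sub, Finset.sum_sub_distrib, hj]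
  have hFg : aeval F g = 0 := by
    refine MvPolynomial.funext fun p => ?_
    rw [map_zero, eval_aeval_eq_eval]
    exact hg _ (by rw [← eval_aeval_eq_eval, hFℓ, map_zero])
  have hF : (Ideal.Quotient.mkₐ k (Ideal.span {ℓ})).comp (aeval F) =
      Ideal.Quotient.mkₐ k (Ideal.span {ℓ}) := by
    refine MvPolynomial.algHom_ext fun i => ?_
    simp only [AlgHom.comp_apply, aeval_X, Ideal.Quotient.mkₐ_eq_mk, Ideal.Quotient.eq, F,
      sub_sub_cancel_left, neg_mem_iff]
    rcases eq_or_ne i j with rfl | hij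
    · simpa using Submodule.smul_of_tower_mem _ (c i)⁻¹ (Ideal.mem_span_singleton_self ℓ)
    · simp [hij]
  rw [← Ideal.Quotient.eq_zero_iff_mem, ← Ideal.Quotient.mkₐ_eq_mk k, ← hF, AlgHom.comp_apply,
    hFg, map_zero]

end Field

end MvPolynomial

/-- Let `S = k[x,y,z,t]` (char `k` = 0), `d ≥ 1`, and let
`ψ : S_d → S_d` be `k`-linear such that `ψ(ℓ·S_{d-1} + h·S_{d-1}) ⊆ ℓ·S_{d-1} + h·S_{d-1}`
for all linearly independent linear forms `ℓ, h ∈ S₁`.  Then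
`ψ(ℓ·S_{d-1}) ⊆ ℓ·S_{d-1}` for every linear form `ℓ ∈ S₁`. -/
theorem stmt_7 {k : Type*} [Field k] [CharZero k] (d : ℕ) (hd : 1 ≤ d)
    (ψ : homogeneousSubmodule (Fin 4) k d →ₗ[k] homogeneousSubmodule (Fin 4) k d)
    (hψ : ∀ ℓ h : MvPolynomial (Fin 4) k,
      ℓ ∈ homogeneousSubmodule (Fin 4) k 1 → h ∈ homogeneousSubmodule (Fin 4) k 1 →
      LinearIndependent k ![ℓ, h] →
      ∀ f : homogeneousSubmodule (Fin 4) k d,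
        (f : MvPolynomial (Fin 4) k) ∈
            Submodule.map (LinearMap.mulLeft k ℓ) (homogeneousSubmodule (Fin 4) k (d - 1)) ⊔
              Submodule.map (LinearMap.mulLeft k h) (homogeneousSubmodule (Fin 4) k (d - 1)) →
          (ψ f : MvPolynomial (Fin 4) k) ∈
            Submodule.map (LinearMap.mulLeft k ℓ) (homogeneousSubmodule (Fin 4) k (d - 1)) ⊔
              Submodule.map (LinearMap.mulLeft k h) (homogeneousSubmodule (Fin 4) k (d - 1))) :
    ∀ ℓ ∈ homogeneousSubmodule (Fin 4) k 1,
      ∀ f : homogeneousSubmodule (Fin 4) k d,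
        (f : MvPolynomial (Fin 4) k) ∈
            Submodule.map (LinearMap.mulLeft k ℓ) (homogeneousSubmodule (Fin 4) k (d - 1)) →
          (ψ f : MvPolynomial (Fin 4) k) ∈
            Submodule.map (LinearMap.mulLeft k ℓ) (homogeneousSubmodule (Fin 4) k (d - 1)) := by
  intro ℓ hℓ f hf
  rcases eq_or_ne ℓ 0 with rfl | hℓ0
  · have hf0 : f = 0 := Subtype.ext (by simpa using hf)
    simp [hf0]
  have hvan : ∀ p : Fin 4 → k, eval p ℓ = 0 → eval p (ψ f : MvPolynomial (Fin 4) k) = 0 := by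
    intro p hp
    obtain ⟨h, hh, hhp, hind⟩ :=
      exists_mem_homogeneousSubmodule_one_eval_eq_zero_linearIndependent (by simp) hℓ hℓ0 p
    exact eval_eq_zero_of_mem_sup_map_mulLeft (hψ ℓ h hℓ hh hind f (Submodule.mem_sup_left hf))
      hp hhp
  refine mem_map_mulLeft_homogeneousSubmodule_of_mem_span_singleton hℓ ?_
    (mem_span_singleton_of_eval_eq_zero hℓ hℓ0 hvan)
  rw [add_tsub_cancel_of_le hd]
  exact (ψ f).2
end

section
/- Let R be a commutative Noetherian ring, P ⊆ R a prime ideal, M a finitely generated R-module, and N ⊆ M a submodule such that the support of M/N is exactly {P} and the length of the localization (M/N)_P as a module over the local ring R_P equals c. Then P^c·M ⊆ N. -/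
/-- Over a local ring, a covering step in the submodule lattice is annihilated
by the maximal ideal. -/
lemma maximalIdeal_smul_le_of_covBy {S : Type*} [CommRing S] [IsLocalRing S]
    {X : Type*} [AddCommGroup X] [Module S X] {a b : Submodule S X} (h : a ⋖ b) :
    IsLocalRing.maximalIdeal S • b ≤ a := by
  set m := IsLocalRing.maximalIdeal S
  have hsub : m • b ⊔ a ≤ b := sup_le (Submodule.smul_le_right.trans le_rfl) h.le
  rcases (CovBy.eq_or_eq h (le_sup_right : a ≤ m • b ⊔ a) hsub) with heq | heq
  · exact le_sup_left.trans heq.le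
  · -- `m • b ⊔ a = b`: contradiction with Nakayama
    exfalso
    obtain ⟨x, hxb, hxa⟩ := SetLike.exists_of_lt h.lt
    have hxle : Submodule.span S {x} ⊔ a ≤ b :=
      sup_le ((Submodule.span_singleton_le_iff_mem _ _).mpr hxb) h.le
    have hspan : Submodule.span S {x} ⊔ a = b := by
      rcases CovBy.eq_or_eq h le_sup_right hxle with h1 | h1
      · exact absurd (h1.le (le_sup_left (b := a) (Submodule.mem_span_singleton_self x))) hxa
      · exact h1
    have hle : Submodule.span S {x} ≤ a ⊔ m • Submodule.span S {x} := by
      have h2 : b ≤ m • b ⊔ a := heq.ge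
      have h3 : m • b ≤ m • Submodule.span S {x} ⊔ a := by
        rw [← hspan, Submodule.smul_sup]
        exact sup_le_sup_left Submodule.smul_le_right _
      calc Submodule.span S {x} ≤ b := le_sup_left.trans hspan.le
        _ ≤ m • b ⊔ a := h2
        _ ≤ (m • Submodule.span S {x} ⊔ a) ⊔ a := sup_le_sup_right h3 a
        _ = a ⊔ m • Submodule.span S {x} := by rw [sup_assoc, sup_idem, sup_comm]
    have := Submodule.le_of_le_smul_of_le_jacobson_bot (Submodule.fg_span_singleton x)
      (IsLocalRing.maximalIdeal_le_jacobson ⊥) hle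
    exact hxa (this (Submodule.mem_span_singleton_self x))

/-- If a module over a local ring has a composition series from `⊥` to `⊤` of length `n`,
then the `n`-th power of the maximal ideal annihilates it. -/
lemma pow_smul_eq_bot_of_compositionSeries {S : Type*} [CommRing S] [IsLocalRing S]
    {X : Type*} [AddCommGroup X] [Module S X]
    (s : CompositionSeries (Submodule S X)) (hh : s.head = ⊥) (hl : s.last = ⊤) :
    IsLocalRing.maximalIdeal S ^ s.length • (⊤ : Submodule S X) = ⊥ := by
  set m := IsLocalRing.maximalIdeal S
  have key : ∀ k, k ≤ s.length →
      m ^ k • (⊤ : Submodule S X) ≤ s ⟨s.length - k, by omega⟩ := by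
    intro k
    induction k with
    | zero =>
      intro _
      have : s ⟨s.length - 0, by omega⟩ = s.last := by
        congr 1
      rw [pow_zero, one_smul, this, hl]
    | succ k ih =>
      intro hk
      have hk' : k ≤ s.length := by omega
      have step : s ⟨s.length - (k + 1), by omega⟩ ⋖ s ⟨s.length - k, by omega⟩ := by
        have hcov := s.step ⟨s.length - (k + 1), by omega⟩
        have e1 : (Fin.castSucc ⟨s.length - (k + 1), by omega⟩ : Fin (s.length + 1)) =
            ⟨s.length - (k + 1), by omega⟩ := by ext; simp
        have e2 : (Fin.succ ⟨s.length - (k + 1), by omega⟩ : Fin (s.length + 1)) =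
            ⟨s.length - k, by omega⟩ := by ext; simp; omega
        rw [e1, e2] at hcov
        exact hcov
      calc m ^ (k + 1) • (⊤ : Submodule S X) = (m * m ^ k) • (⊤ : Submodule S X) := by
            rw [pow_succ']
        _ = m • (m ^ k • (⊤ : Submodule S X)) := Submodule.smul_assoc _ _ _
        _ ≤ m • s ⟨s.length - k, by omega⟩ := smul_mono_right _ (ih hk')
        _ ≤ s ⟨s.length - (k + 1), by omega⟩ := maximalIdeal_smul_le_of_covBy step
  have := key s.length le_rfl
  have h0 : s ⟨s.length - s.length, by omega⟩ = s.head := by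
    congr 1
    ext
    simp
  rw [h0, hh] at this
  exact le_bot_iff.mp this

/-- Let `R` be a commutative Noetherian ring, `P ⊆ R` a prime ideal,
`M` a finitely generated `R`-module and `N ⊆ M` a submodule such that the support of
`M/N` is exactly `{P}` and the length of the localization `(M/N)_P` over the local ring
`R_P` equals `c` (expressed by the existence of a composition series of length `c` from
`⊥` to `⊤`).  Then `P^c·M ⊆ N`. -/
theorem stmt_9 {R : Type*} [CommRing R] [IsNoetherianRing R]
    (P : Ideal R) [hP : P.IsPrime]
    {M : Type*} [AddCommGroup M] [Module R M] [Module.Finite R M]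
    (N : Submodule R M) (c : ℕ)
    (hsupp : Module.support R (M ⧸ N) = {⟨P, hP⟩})
    (hlen : ∃ s : CompositionSeries (Submodule (Localization.AtPrime P)
        (LocalizedModule P.primeCompl (M ⧸ N))),
      s.head = ⊥ ∧ s.last = ⊤ ∧ s.length = c) :
    P ^ c • (⊤ : Submodule R M) ≤ N := by
  obtain ⟨s, hh, hl, hc⟩ := hlen
  -- the localization map `M/N → (M/N)_P` is injective
  have hinj : ∀ q : M ⧸ N,
      (LocalizedModule.mk q (1 : P.primeCompl) :
        LocalizedModule P.primeCompl (M ⧸ N)) = 0 → q = 0 := by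
    intro q hq
    rw [show (0 : LocalizedModule P.primeCompl (M ⧸ N)) =
        LocalizedModule.mk 0 (1 : P.primeCompl) from (LocalizedModule.zero_mk _).symm,
      LocalizedModule.mk_eq] at hq
    obtain ⟨u, hu⟩ := hq
    simp only [one_smul, smul_zero] at hu
    -- so `u • q = 0` with `u ∉ P`
    set T := Submodule.span R {q}
    have hTsupp : Module.support R T ⊆ Module.support R (M ⧸ N) :=
      Module.support_subset_of_injective T.subtype Subtype.coe_injective
    have hPT : (⟨P, hP⟩ : PrimeSpectrum R) ∉ Module.support R T := by
      rw [Module.notMem_support_iff']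
      intro m
      obtain ⟨t, ht⟩ := Submodule.mem_span_singleton.mp m.2
      refine ⟨u, u.2, ?_⟩
      have hu' : (u : R) • q = 0 := hu
      have : (u : R) • (m : M ⧸ N) = 0 := by
        rw [← ht, smul_comm, hu', smul_zero]
      exact Subtype.ext this
    have hTempty : Module.support R T = ∅ := by
      rw [hsupp] at hTsupp
      ext p
      simp only [Set.mem_empty_iff_false, iff_false]
      intro hp
      exact hPT (hTsupp hp ▸ hp)
    have : Subsingleton T := Module.support_eq_empty_iff.mp hTempty
    have hq0 : (⟨q, Submodule.mem_span_singleton_self q⟩ : T) = ⟨0, T.zero_mem⟩ :=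
      Subsingleton.elim _ _
    exact congrArg Subtype.val hq0
  -- now kill `P ^ c` against the composition series
  rw [Submodule.smul_le]
  intro r hr x _
  rw [← Submodule.Quotient.mk_eq_zero]
  apply hinj
  have e1 : (LocalizedModule.mk (Submodule.Quotient.mk (r • x) : M ⧸ N) (1 : P.primeCompl) :
      LocalizedModule P.primeCompl (M ⧸ N)) =
      r • LocalizedModule.mk (Submodule.Quotient.mk x : M ⧸ N) (1 : P.primeCompl) := by
    rw [LocalizedModule.smul'_mk]
    congr 1
  rw [e1, ← algebraMap_smul (Localization.AtPrime P) r]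
  have hmem : algebraMap R (Localization.AtPrime P) r ∈
      IsLocalRing.maximalIdeal (Localization.AtPrime P) ^ c := by
    have h1 : algebraMap R (Localization.AtPrime P) r ∈
        Ideal.map (algebraMap R (Localization.AtPrime P)) (P ^ c) :=
      Ideal.mem_map_of_mem _ hr
    rwa [Ideal.map_pow, Localization.AtPrime.map_eq_maximalIdeal] at h1
  have hbot := pow_smul_eq_bot_of_compositionSeries s hh hl
  rw [hc] at hbot
  have : algebraMap R (Localization.AtPrime P) r •
      (LocalizedModule.mk (Submodule.Quotient.mk x : M ⧸ N) (1 : P.primeCompl) :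
        LocalizedModule P.primeCompl (M ⧸ N)) ∈
      IsLocalRing.maximalIdeal (Localization.AtPrime P) ^ c •
        (⊤ : Submodule (Localization.AtPrime P) (LocalizedModule P.primeCompl (M ⧸ N))) :=
    Submodule.smul_mem_smul hmem Submodule.mem_top
  rw [hbot] at this
  exact this
end

section
/- Let k be a field, R = k[x,y], let f ∈ R be a nonzero form of degree d ≥ 1, let g ∈ R be a form of degree e, let n ∈ ℕ, and let I ⊆ R be a homogeneous ideal with I ⊆ f^n·R. Assume there is N such that for all j ≥ N: (i) g·R_{j-e} ⊆ f^n·R_{j-nd}; (ii) g·f·R_{j-e-d} ⊆ I_j; and (iii) multiplication by g induces a bijection R_{j-e}/(f·R_{j-e-d}) → (f^n·R_{j-nd})/I_j. Then there is N' such that I_j = f^{n+1}·R_{j-(n+1)d} for all j ≥ N'. -/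
/-!
Condition (i) applied to `x ^ m` and `y ^ m` gives `f ^ n ∣ g * x ^ m` and `f ^ n ∣ g * y ^ m`;
since `x ^ m` and `y ^ m` are relatively prime, `f ^ n ∣ g`. Then for `b = f ^ n * u ∈ I_j` we get
`g * u ∈ I`, so injectivity in (iii) puts `u` in `f * R`, i.e. `b ∈ f ^ (n + 1) * R`. Conversely,
for `c` of the right degree, surjectivity in (iii) gives `f ^ n * c ≡ g * a` modulo `I`, hence
`f ^ (n + 1) * c ≡ g * f * a ≡ 0` by (ii).
-/

open MvPolynomial

lemma dvd_of_dvd_mul_of_dvd_mul_of_isRelPrime {α : Type*} [CommMonoidWithZero α]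
    [UniqueFactorizationMonoid α] {p a b c : α} (hbc : IsRelPrime b c) (hb : p ∣ a * b)
    (hc : p ∣ a * c) : p ∣ a := by
  let := UniqueFactorizationMonoid.toGCDMonoid α
  calc p ∣ gcd (a * b) (a * c) := dvd_gcd hb hc
    _ ∣ a * gcd b c := (gcd_mul_left' a b c).dvd
    _ ∣ a := (IsUnit.mul_right_dvd (hbc (gcd_dvd_left b c) (gcd_dvd_right b c))).mpr dvd_rfl

namespace MvPolynomial

lemma isRelPrime_X_X {σ R : Type*} [CommRing R] [IsDomain R] {i j : σ} (hij : i ≠ j) :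
    IsRelPrime (X i : MvPolynomial σ R) (X j) :=
  X_prime.irreducible.isRelPrime_iff_not_dvd.mpr (by simpa using hij)

lemma dvd_of_dvd_mul_X_pow_of_dvd_mul_X_pow {σ R : Type*} [CommRing R] [IsDomain R]
    [UniqueFactorizationMonoid R] {p g : MvPolynomial σ R} {i j : σ} (hij : i ≠ j) (m : ℕ)
    (hi : p ∣ g * X i ^ m) (hj : p ∣ g * X j ^ m) : p ∣ g :=
  dvd_of_dvd_mul_of_dvd_mul_of_isRelPrime (isRelPrime_X_X hij).pow hi hj

lemma dvd_of_map_mulLeft_le {σ R : Type*} [CommRing R] [IsDomain R]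
    [UniqueFactorizationMonoid R] [Nontrivial σ] {q g : MvPolynomial σ R} {m : ℕ}
    {S : Submodule R (MvPolynomial σ R)}
    (h : Submodule.map (LinearMap.mulLeft R g) (homogeneousSubmodule σ R m) ≤
      Submodule.map (LinearMap.mulLeft R q) S) :
    q ∣ g := by
  have hdvd (i : σ) : q ∣ g * X i ^ m := by
    obtain ⟨t, -, ht⟩ := h (Submodule.mem_map_of_mem (isHomogeneous_X_pow i m))
    exact ⟨t, ht.symm⟩
  obtain ⟨i, j, hij⟩ := exists_pair_ne σ
  exact dvd_of_dvd_mul_X_pow_of_dvd_mul_X_pow hij m (hdvd i) (hdvd j)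

attribute [local instance] MvPolynomial.gradedAlgebra in
lemma homogeneousComponent_mul_add_of_isHomogeneous {σ R : Type*} [CommSemiring R]
    {f : MvPolynomial σ R} {m : ℕ} (hf : f.IsHomogeneous m) (w : MvPolynomial σ R) (i : ℕ) :
    homogeneousComponent (m + i) (f * w) = f * homogeneousComponent i w := by
  rw [← decomposition.decompose'_apply, ← decomposition.decompose'_apply]
  exact DirectSum.coe_decompose_mul_add_of_left_mem _
    (show f ∈ homogeneousSubmodule σ R m from hf)

end MvPolynomial

section homDegZ

variable {k σ : Type*} [CommSemiring k]

@[simp]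
lemma homDegZ_natCast (m : ℕ) : homDegZ k σ (m : ℤ) = homogeneousSubmodule σ k m := by
  simp [homDegZ]

lemma homDegZ_of_eq {m : ℤ} {a : ℕ} (h : m = a) :
    homDegZ k σ m = homogeneousSubmodule σ k a := by
  rw [h, homDegZ_natCast]

lemma map_mulLeft_homDegZ_le_s10 {q : MvPolynomial σ k} {m : ℕ} (hq : q.IsHomogeneous m) (j : ℕ) :
    Submodule.map (LinearMap.mulLeft k q) (homDegZ k σ ((j : ℤ) - m)) ≤
      homogeneousSubmodule σ k j := by
  unfold homDegZ
  split_ifs with hjm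
  · rintro _ ⟨c, hc, rfl⟩
    have hdeg : m + ((j : ℤ) - m).toNat = j := by omega
    rw [LinearMap.mulLeft_apply, mem_homogeneousSubmodule, ← hdeg]
    exact hq.mul hc
  · simp

end homDegZ

section

variable {k σ : Type*} [CommRing k] {f g : MvPolynomial σ k} {d e n N : ℕ}
  {I : Ideal (MvPolynomial σ k)}

lemma inf_homogeneousSubmodule_le_map_mulLeft_pow_succ (hf : f.IsHomogeneous d)
    (hIf : I ≤ Ideal.span {f ^ n}) (hdvd : f ^ n ∣ g)
    (hinj : ∀ j : ℕ, N ≤ j → ∀ a ∈ homDegZ k σ ((j : ℤ) - e),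
      g * a ∈ I →
        a ∈ Submodule.map (LinearMap.mulLeft k f) (homDegZ k σ ((j : ℤ) - e - d)))
    {j : ℕ} (hj : N + n * d ≤ j) :
    Submodule.restrictScalars k I ⊓ homogeneousSubmodule σ k j ≤
      Submodule.map (LinearMap.mulLeft k (f ^ (n + 1)))
        (homDegZ k σ ((j : ℤ) - (n + 1) * d)) := by
  rintro b ⟨hbI, hbj⟩
  obtain ⟨w, hw⟩ := Ideal.mem_span_singleton'.mp (hIf hbI)
  set u := homogeneousComponent (j - n * d) w
  have hbu : b = f ^ n * u := by
    have hfn : (f ^ n).IsHomogeneous (n * d) := by simpa only [mul_comm] using hf.pow n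
    rw [← homogeneousComponent_eq_self hbj, ← hw, mul_comm w,
      ← homogeneousComponent_mul_add_of_isHomogeneous hfn, Nat.add_sub_cancel' (by omega)]
  have hgu : g * u ∈ I := by
    obtain ⟨h, rfl⟩ := hdvd
    rw [show f ^ n * h * u = h * b by rw [hbu]; ring]
    exact I.mul_mem_left h hbI
  obtain ⟨s, hs, hsu⟩ := hinj (j - n * d + e) (by omega) u
    (by rw [homDegZ_of_eq (a := j - n * d) (by push_cast; omega)]; apply homogeneousComponent_mem)
    hgu
  refine ⟨s, ?_, ?_⟩
  · rwa [show ((j - n * d + e : ℕ) : ℤ) - e - d = (j : ℤ) - (n + 1) * d by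
    push_cast [Nat.cast_sub (show n * d ≤ j by omega)]; ring] at hs
  · rw [LinearMap.mulLeft_apply] at hsu ⊢
    rw [hbu, ← hsu, pow_succ, mul_assoc]

lemma map_mulLeft_pow_succ_le_restrictScalars
    (hii : ∀ j : ℕ, N ≤ j →
      Submodule.map (LinearMap.mulLeft k (g * f))
          (homDegZ k σ ((j : ℤ) - e - d)) ≤
        Submodule.restrictScalars k I)
    (hsurj : ∀ j : ℕ, N ≤ j →
      ∀ b ∈ Submodule.map (LinearMap.mulLeft k (f ^ n))
          (homDegZ k σ ((j : ℤ) - n * d)),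
        ∃ a ∈ homDegZ k σ ((j : ℤ) - e), b - g * a ∈ I)
    {j : ℕ} (hj : N + d ≤ j) :
    Submodule.map (LinearMap.mulLeft k (f ^ (n + 1)))
        (homDegZ k σ ((j : ℤ) - (n + 1) * d)) ≤
      Submodule.restrictScalars k I := by
  rintro _ ⟨c, hc, rfl⟩
  have hjd : ((j - d : ℕ) : ℤ) = j - d := by omega
  obtain ⟨a, ha, hIa⟩ := hsurj (j - d) (by omega) (f ^ n * c)
    ⟨c, by rwa [hjd, show (j : ℤ) - d - n * d = j - (n + 1) * d by ring], rfl⟩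
  have hgfa : g * f * a ∈ I :=
    hii j (by omega) ⟨a, by rwa [hjd, sub_right_comm] at ha, rfl⟩
  have hsplit : f ^ (n + 1) * c = f * (f ^ n * c - g * a) + g * f * a := by ring
  rw [Submodule.restrictScalars_mem, LinearMap.mulLeft_apply, hsplit]
  exact I.add_mem (I.mul_mem_left f hIa) hgfa

end

theorem stmt_10_general {k : Type*} [Field k]
    (f g : MvPolynomial (Fin 2) k) (d e n : ℕ)
    (hf : f ∈ homogeneousSubmodule (Fin 2) k d)
    (I : Ideal (MvPolynomial (Fin 2) k))
    (hIf : I ≤ Ideal.span {f ^ n})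
    (N : ℕ)
    (hi : ∀ j : ℕ, N ≤ j →
      Submodule.map (LinearMap.mulLeft k g) (homDegZ k (Fin 2) ((j : ℤ) - e)) ≤
        Submodule.map (LinearMap.mulLeft k (f ^ n))
          (homDegZ k (Fin 2) ((j : ℤ) - n * d)))
    (hii : ∀ j : ℕ, N ≤ j →
      Submodule.map (LinearMap.mulLeft k (g * f))
          (homDegZ k (Fin 2) ((j : ℤ) - e - d)) ≤
        Submodule.restrictScalars k I)
    (hinj : ∀ j : ℕ, N ≤ j → ∀ a ∈ homDegZ k (Fin 2) ((j : ℤ) - e),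
      g * a ∈ I →
        a ∈ Submodule.map (LinearMap.mulLeft k f) (homDegZ k (Fin 2) ((j : ℤ) - e - d)))
    (hsurj : ∀ j : ℕ, N ≤ j →
      ∀ b ∈ Submodule.map (LinearMap.mulLeft k (f ^ n))
          (homDegZ k (Fin 2) ((j : ℤ) - n * d)),
        ∃ a ∈ homDegZ k (Fin 2) ((j : ℤ) - e), b - g * a ∈ I) :
    ∃ N' : ℕ, ∀ j : ℕ, N' ≤ j →
      Submodule.restrictScalars k I ⊓ homogeneousSubmodule (Fin 2) k j =
        Submodule.map (LinearMap.mulLeft k (f ^ (n + 1)))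
          (homDegZ k (Fin 2) ((j : ℤ) - (n + 1) * d)) := by
  have hfd : f.IsHomogeneous d := hf
  have hdvd : f ^ n ∣ g := by
    have hiN := hi (N + e) (by omega)
    rw [Nat.cast_add, add_sub_cancel_right, homDegZ_natCast] at hiN
    exact dvd_of_map_mulLeft_le hiN
  have hpow : (f ^ (n + 1)).IsHomogeneous ((n + 1) * d) := by
    simpa only [mul_comm] using hfd.pow (n + 1)
  refine ⟨N + n * d + d, fun j hj => le_antisymm ?_ ?_⟩
  · exact inf_homogeneousSubmodule_le_map_mulLeft_pow_succ hfd hIf hdvd hinj (by omega)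
  · refine le_inf (map_mulLeft_pow_succ_le_restrictScalars hii hsurj (by omega)) ?_
    simpa only [Nat.cast_mul, Nat.cast_add, Nat.cast_one] using map_mulLeft_homDegZ_le_s10 hpow j

/-- Let `R = k[x,y]`, `f` a nonzero form of degree `d ≥ 1`, `g` a form
of degree `e`, `n ∈ ℕ`, and `I ⊆ f^n·R` a homogeneous ideal.  Assume that for all large
`j`: (i) `g·R_{j-e} ⊆ f^n·R_{j-nd}`; (ii) `g·f·R_{j-e-d} ⊆ I_j`; and (iii) multiplication
by `g` induces a bijection `R_{j-e}/(f·R_{j-e-d}) → (f^n·R_{j-nd})/I_j` (expressed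
elementwise by injectivity and surjectivity).  Then `I_j = f^(n+1)·R_{j-(n+1)d}` for all
sufficiently large `j`. -/
theorem stmt_10 {k : Type*} [Field k]
    (f g : MvPolynomial (Fin 2) k) (d e n : ℕ) (hd : 1 ≤ d)
    (hf0 : f ≠ 0) (hf : f ∈ homogeneousSubmodule (Fin 2) k d)
    (hg : g ∈ homogeneousSubmodule (Fin 2) k e)
    (I : Ideal (MvPolynomial (Fin 2) k))
    (hIhom : ∀ p ∈ I, ∀ m : ℕ, homogeneousComponent m p ∈ I)
    (hIf : I ≤ Ideal.span {f ^ n})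
    (N : ℕ)
    (hi : ∀ j : ℕ, N ≤ j →
      Submodule.map (LinearMap.mulLeft k g) (homDegZ k (Fin 2) ((j : ℤ) - e)) ≤
        Submodule.map (LinearMap.mulLeft k (f ^ n))
          (homDegZ k (Fin 2) ((j : ℤ) - n * d)))
    (hii : ∀ j : ℕ, N ≤ j →
      Submodule.map (LinearMap.mulLeft k (g * f))
          (homDegZ k (Fin 2) ((j : ℤ) - e - d)) ≤
        Submodule.restrictScalars k I)
    (hinj : ∀ j : ℕ, N ≤ j → ∀ a ∈ homDegZ k (Fin 2) ((j : ℤ) - e),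
      g * a ∈ I →
        a ∈ Submodule.map (LinearMap.mulLeft k f) (homDegZ k (Fin 2) ((j : ℤ) - e - d)))
    (hsurj : ∀ j : ℕ, N ≤ j →
      ∀ b ∈ Submodule.map (LinearMap.mulLeft k (f ^ n))
          (homDegZ k (Fin 2) ((j : ℤ) - n * d)),
        ∃ a ∈ homDegZ k (Fin 2) ((j : ℤ) - e), b - g * a ∈ I) :
    ∃ N' : ℕ, ∀ j : ℕ, N' ≤ j →
      Submodule.restrictScalars k I ⊓ homogeneousSubmodule (Fin 2) k j =
        Submodule.map (LinearMap.mulLeft k (f ^ (n + 1)))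
          (homDegZ k (Fin 2) ((j : ℤ) - (n + 1) * d)) :=
  stmt_10_general f g d e n hf I hIf N hi hii hinj hsurj
end
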